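/- arXiv:0806.1776 — 4 statements merged into one kernel-verified Lean document; each statement's English description precedes it below -/
import Mathlib

section
/- If subsets I, J of [m] are weakly separated, then they are non-crossing. -/
open Finset

/-- Pairs `{u<v}` and `{x<y}` (values in `ℕ ∪ {∞}`) are non-nesting if
neither `x<u<v<y` nor `u<x<y<v`. -/
def PairNonNesting (u v x y : WithTop ℕ) : Prop :=
  ¬ (x < u ∧ u < v ∧ v < y) ∧ ¬ (u < x ∧ x < y ∧ y < v)

/-- Pairs `{u<v}` and `{x<y}` are non-crossing if neither `x<u<y<v` nor `u<x<v<y`. -/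
def PairNonCrossing (u v x y : WithTop ℕ) : Prop :=
  ¬ (x < u ∧ u < y ∧ y < v) ∧ ¬ (u < x ∧ x < v ∧ v < y)

/-- Remove one common entry (equal entries in equal positions) from the two lists. -/
def stripOnce (I J : List ℕ) : Option (List ℕ × List ℕ) :=
  ((List.range (min I.length J.length)).find? (fun s => I.getD s 0 == J.getD s 0)).map
    (fun s => (I.eraseIdx s, J.eraseIdx s))

def stripAux : ℕ → List ℕ → List ℕ → List ℕ × List ℕ
  | 0, I, J => (I, J)
  | n+1, I, J =>
    match stripOnce I J with
    | none => (I, J)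
    | some (I', J') => stripAux n I' J'

/-- Repeatedly remove the "common part" (equal entries in equal positions). -/
def strip (I J : List ℕ) : List ℕ × List ℕ := stripAux I.length I J

/-- The `s`-th entry (0-indexed) of the list, viewed in `ℕ ∪ {∞}`, with `∞` beyond the end. -/
def entry (l : List ℕ) (s : ℕ) : WithTop ℕ :=
  (l.map (fun a => (a : WithTop ℕ))).getD s ⊤

/-- Non-nesting condition on sorted lists `I`, `J` with `I` the shorter one:
after removing the common part, all consecutive-difference pairs are non-nesting
(with the `∞` convention for the shorter list). -/
def ListsNonNesting (I J : List ℕ) : Prop :=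
  ∀ s : ℕ, s + 1 < (strip I J).2.length →
    PairNonNesting (entry (strip I J).1 s) (entry (strip I J).1 (s+1))
      (entry (strip I J).2 s) (entry (strip I J).2 (s+1))

def ListsNonCrossing (I J : List ℕ) : Prop :=
  ∀ s : ℕ, s + 1 < (strip I J).2.length →
    PairNonCrossing (entry (strip I J).1 s) (entry (strip I J).1 (s+1))
      (entry (strip I J).2 s) (entry (strip I J).2 (s+1))

/-- The increasing list of elements of a finite set. -/
def sortedList (I : Finset ℕ) : List ℕ := I.sort (· ≤ ·)

/-- Subsets `I`, `J` are non-nesting. -/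
def SetsNonNesting (I J : Finset ℕ) : Prop :=
  if I.card ≤ J.card then ListsNonNesting (sortedList I) (sortedList J)
  else ListsNonNesting (sortedList J) (sortedList I)

/-- Subsets `I`, `J` are non-crossing. -/
def SetsNonCrossing (I J : Finset ℕ) : Prop :=
  if I.card ≤ J.card then ListsNonCrossing (sortedList I) (sortedList J)
  else ListsNonCrossing (sortedList J) (sortedList I)

/-- `A ≺ B`: every element of `A` is smaller than every element of `B`. -/
def Precedes (A B : Finset ℕ) : Prop := ∀ a ∈ A, ∀ b ∈ B, a < b

/-- Leclerc–Zelevinsky weak separation. -/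
def WeaklySeparated (I J : Finset ℕ) : Prop :=
  (J.card ≤ I.card ∧ ∃ J₁ J₂ : Finset ℕ, Disjoint J₁ J₂ ∧ J \ I = J₁ ∪ J₂ ∧
    Precedes J₁ (I \ J) ∧ Precedes (I \ J) J₂) ∨
  (I.card ≤ J.card ∧ ∃ I₁ I₂ : Finset ℕ, Disjoint I₁ I₂ ∧ I \ J = I₁ ∪ I₂ ∧
    Precedes I₁ (J \ I) ∧ Precedes (J \ I) I₂)

/-- Number of north steps of the path `p(I)` among its first `k` steps. -/
def northCount (I : Finset ℕ) (k : ℕ) : ℕ := (I.filter (fun i => i ≤ k)).card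

/-- Paths `p(I)`, `p(J)` are non-crossing: one lies weakly northwest of the other
along their entire length. -/
def PathsNonCrossing (I J : Finset ℕ) : Prop :=
  (∀ k, northCount J k ≤ northCount I k) ∨ (∀ k, northCount I k ≤ northCount J k)

/-- `[k₁, k₂]` (in step coordinates) is a proper common part of the paths `p(I)`, `p(J)`
of length `m`: a maximal shared connected subpath containing neither the source nor an
endpoint.  Maximality is expressed by the two paths separating just before `k₁` and just
after `k₂`. -/
def ProperCommonPart (m : ℕ) (I J : Finset ℕ) (k₁ k₂ : ℕ) : Prop :=
  1 ≤ k₁ ∧ k₁ ≤ k₂ ∧ k₂ < m ∧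
  (∀ k, k₁ ≤ k → k ≤ k₂ → northCount I k = northCount J k) ∧
  northCount I (k₁ - 1) ≠ northCount J (k₁ - 1) ∧
  northCount I (k₂ + 1) ≠ northCount J (k₂ + 1)

/-- Paths `p(I)`, `p(J)` are non-kissing: at every proper common part each path leaves
in the same direction in which it entered (the common part is a crossing, not a kiss). -/
def PathsNonKissing (m : ℕ) (I J : Finset ℕ) : Prop :=
  ∀ k₁ k₂, ProperCommonPart m I J k₁ k₂ → ((k₁ ∈ I) ↔ (k₂ + 1 ∈ I))

/-- Number of north steps among the first `k` steps, for `k ∈ ℤ` (zero for `k ≤ 0`). -/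
def northCountZ (I : Finset ℕ) (k : ℤ) : ℤ := (northCount I k.toNat : ℤ)

/-- The indicator Gelfand–Tsetlin pattern of the path `p(I)`: the cell
`[x,x+1] × [y,y+1]` gets a `1` if it lies southeast of the path and `0` if northwest. -/
noncomputable def Tpat (I : Finset ℕ) (x y : ℤ) : ℝ :=
  if y + 1 ≤ northCountZ I (x + y + 1) then 1 else 0

/-- `(x,y)` is a node of the partial staircase `L ⊆ L_m` with set of sink heights `A`:
it lies (weakly) southwest of some sink `(m-j, j)`, `j ∈ A`. -/
def NodeL (m : ℕ) (A : Finset ℕ) (x y : ℤ) : Prop :=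
  0 ≤ x ∧ 0 ≤ y ∧ ∃ j ∈ A, x + j ≤ m ∧ y ≤ j

/-- Same, with natural-number coordinates. -/
def InL (m : ℕ) (A : Finset ℕ) (x y : ℕ) : Prop :=
  ∃ j ∈ A, x + j ≤ m ∧ y ≤ j

/-- The path `p(I)` is contained in the partial staircase with sink heights `A`. -/
def PathInL (m : ℕ) (A : Finset ℕ) (I : Finset ℕ) : Prop :=
  ∀ k ≤ m, InL m A (k - northCount I k) (northCount I k)

/-- A critical node has edges of `L` leaving it toward both the north and the east. -/
def CriticalNode (m : ℕ) (A : Finset ℕ) (x y : ℕ) : Prop :=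
  InL m A (x + 1) y ∧ InL m A x (y + 1)

open Classical in
/-- `N(L)`: the number of critical nodes of the partial staircase. -/
noncomputable def numCritical (m : ℕ) (A : Finset ℕ) : ℕ :=
  ((Finset.range (m+1) ×ˢ Finset.range (m+1)).filter
    (fun p => CriticalNode m A p.1 p.2)).card

/-!
Stripping the common part removes an element of `I ∩ J` from both lists, so the differences
`I \ J`, `J \ I` only shrink and weak separation survives. On the stripped sorted lists, a
crossing at position `s` either puts an element of the shorter list's difference strictly inside
the range of the other difference, or forces the shorter list to have the larger difference; both
are read off by counting the entries of the two lists below a suitable threshold.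
-/
lemma entry_eq_getD (l : List ℕ) (s : ℕ) : entry l s = (l[s]?.map (↑)).getD ⊤ := by
  simp only [entry, List.pure_def, List.bind_eq_flatMap, ← List.map_eq_flatMap, List.map_map,
    List.getD_eq_getElem?_getD, List.getElem?_map]
  rfl

lemma entry_of_lt {l : List ℕ} {s : ℕ} (h : s < l.length) : entry l s = l[s] := by
  simp [entry_eq_getD, h]

lemma entry_of_le {l : List ℕ} {s : ℕ} (h : l.length ≤ s) : entry l s = ⊤ := by
  simp [entry_eq_getD, h]

lemma lt_length_of_entry_lt {l : List ℕ} {s : ℕ} {x : WithTop ℕ} (h : entry l s < x) :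
    s < l.length := by
  by_contra! hs
  rw [entry_of_le hs] at h
  exact not_top_lt h

namespace List.SortedLT

variable {L : List ℕ} {s t : ℕ}

lemma entry_lt_entry_succ (hL : L.SortedLT) (hs : s < L.length) :
    entry L s < entry L (s + 1) := by
  rw [entry_of_lt hs]
  by_cases hs' : s + 1 < L.length
  · rw [entry_of_lt hs']
    exact_mod_cast hL.getElem_lt_getElem_iff.mpr s.lt_succ_self
  · rw [entry_of_le (not_lt.mp hs')]
    exact WithTop.coe_lt_top _

lemma getElem_le_iff_of_entry (hL : L.SortedLT) (hs : entry L s ≤ t)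
    (ht : (t : WithTop ℕ) < entry L (s + 1)) {i : ℕ} (hi : i < L.length) :
    L[i] ≤ t ↔ i ≤ s := by
  have hsL : s < L.length := lt_length_of_entry_lt (hs.trans_lt (WithTop.coe_lt_top t))
  rw [entry_of_lt hsL] at hs
  norm_cast at hs
  refine ⟨fun h => ?_, fun h => (hL.getElem_le_getElem_iff.mpr h).trans hs⟩
  by_contra! hsi
  have hs1 : s + 1 < L.length := by omega
  rw [entry_of_lt hs1] at ht
  norm_cast at ht
  exact absurd ((hL.getElem_le_getElem_iff (hi := hs1) (hj := hi)).mpr hsi) (by omega)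

lemma card_filter_le_of_entry (hL : L.SortedLT) (hs : entry L s ≤ t)
    (ht : (t : WithTop ℕ) < entry L (s + 1)) :
    #(L.toFinset.filter (· ≤ t)) = s + 1 := by
  have hsL : s < L.length := lt_length_of_entry_lt (hs.trans_lt (WithTop.coe_lt_top t))
  have htake : L.toFinset.filter (· ≤ t) = (L.take (s + 1)).toFinset := by
    ext a
    simp only [Finset.mem_filter, List.mem_toFinset, List.mem_iff_getElem, List.length_take,
      List.getElem_take]
    constructor
    · rintro ⟨⟨i, hi, rfl⟩, hit⟩
      exact ⟨i, by have := (hL.getElem_le_iff_of_entry hs ht hi).mp hit; omega, rfl⟩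
    · rintro ⟨i, hi, rfl⟩
      exact ⟨⟨i, by omega, rfl⟩, (hL.getElem_le_iff_of_entry hs ht _).mpr (by omega)⟩
  rw [htake, List.toFinset_card_of_nodup ((List.take_sublist _ _).nodup hL.nodup),
    List.length_take]
  omega

lemma not_mem_of_entry_lt (hL : L.SortedLT) (hs : entry L s < t)
    (ht : (t : WithTop ℕ) < entry L (s + 1)) : t ∉ L := by
  intro hmem
  obtain ⟨i, hi, rfl⟩ := List.mem_iff_getElem.mp hmem
  have his := (hL.getElem_le_iff_of_entry hs.le ht hi).mp le_rfl
  rw [entry_of_lt (lt_length_of_entry_lt (hs.trans (WithTop.coe_lt_top _)))] at hs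
  norm_cast at hs
  exact absurd (hL.getElem_le_getElem_iff.mpr his) (not_le.mpr hs)

end List.SortedLT

lemma card_filter_add_card_filter_sdiff {α : Type*} [DecidableEq α] (X Y : Finset α)
    (p : α → Prop) [DecidablePred p] :
    #(X.filter p) + #((Y \ X).filter p) = #((X ∪ Y).filter p) := by
  rw [← card_union_of_disjoint (disjoint_filter_filter disjoint_sdiff), ← filter_union,
    union_sdiff_self_eq_union]

/-- The paper's condition `X \ Y = X' ⊔ X''` with `X' ≺ Y \ X ≺ X''`. -/
def SplitsAround (X Y : Finset ℕ) : Prop :=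
  ∀ x ∈ X \ Y, (∀ y ∈ Y \ X, x < y) ∨ (∀ y ∈ Y \ X, y < x)

lemma splitsAround_of_precedes {X Y X₁ X₂ : Finset ℕ} (hsplit : X \ Y = X₁ ∪ X₂)
    (h₁ : Precedes X₁ (Y \ X)) (h₂ : Precedes (Y \ X) X₂) : SplitsAround X Y := by
  intro x hx
  rw [hsplit, mem_union] at hx
  rcases hx with hx | hx
  · exact .inl (h₁ x hx)
  · exact .inr fun y hy => h₂ y hy x hx

lemma SplitsAround.mono {X Y X' Y' : Finset ℕ} (h : SplitsAround X Y) (hX : X' \ Y' ⊆ X \ Y)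
    (hY : Y' \ X' ⊆ Y \ X) : SplitsAround X' Y' := by
  intro x hx
  rcases h x (hX hx) with h | h
  · exact .inl fun y hy => h y (hY hy)
  · exact .inr fun y hy => h y (hY hy)

lemma PairNonCrossing.symm {u v x y : WithTop ℕ} (h : PairNonCrossing u v x y) :
    PairNonCrossing x y u v :=
  ⟨h.2, h.1⟩

section Interleaving

variable {A B : List ℕ} {s : ℕ}

lemma not_entry_interleaved_of_splitsAround (hA : A.SortedLT) (hB : B.SortedLT)
    (hsep : SplitsAround A.toFinset B.toFinset) :
    ¬ (entry B s < entry A s ∧ entry A s < entry B (s + 1) ∧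
      entry B (s + 1) < entry A (s + 1)) := by
  rintro ⟨h₁, h₂, h₃⟩
  have hsA : s < A.length := lt_length_of_entry_lt h₂
  have hsB : s + 1 < B.length := lt_length_of_entry_lt h₃
  rw [entry_of_lt hsA] at h₁ h₂
  rw [entry_of_lt hsB] at h₂ h₃
  set a := A[s]
  set b := B[s + 1]
  have haA : a ∈ A.toFinset := List.mem_toFinset.mpr (List.getElem_mem hsA)
  have haB : a ∉ B.toFinset := by
    simpa using hB.not_mem_of_entry_lt h₁ (by rwa [entry_of_lt hsB])
  have hbB : b ∈ B.toFinset := List.mem_toFinset.mpr (List.getElem_mem hsB)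
  have hbA : b ∉ A.toFinset := by
    simpa using hA.not_mem_of_entry_lt (by rwa [entry_of_lt hsA]) h₃
  have hab : a < b := by exact_mod_cast h₂
  -- `A` and `B` have equally many entries `≤ a`, so `a ∈ A \ B` is matched by some `b' ∈ B \ A`
  have hcA : #(A.toFinset.filter (· ≤ a)) = s + 1 :=
    hA.card_filter_le_of_entry (entry_of_lt hsA).le (by exact_mod_cast h₂.trans h₃)
  have hcB : #(B.toFinset.filter (· ≤ a)) = s + 1 :=
    hB.card_filter_le_of_entry h₁.le (by rwa [entry_of_lt hsB])
  have hcount := card_filter_add_card_filter_sdiff A.toFinset B.toFinset (· ≤ a)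
  rw [union_comm, ← card_filter_add_card_filter_sdiff B.toFinset A.toFinset] at hcount
  have hpos : 0 < #((A.toFinset \ B.toFinset).filter (· ≤ a)) :=
    card_pos.mpr ⟨a, mem_filter.mpr ⟨mem_sdiff.mpr ⟨haA, haB⟩, le_rfl⟩⟩
  obtain ⟨b', hb'⟩ :=
    card_pos.mp (show 0 < #((B.toFinset \ A.toFinset).filter (· ≤ a)) by omega)
  rw [mem_filter] at hb'
  rcases hsep a (mem_sdiff.mpr ⟨haA, haB⟩) with h | h
  · exact absurd (h b' hb'.1) (not_lt.mpr hb'.2)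
  · exact absurd (h b (mem_sdiff.mpr ⟨hbB, hbA⟩)) (not_lt.mpr hab.le)

lemma not_entry_interleaved_of_splitsAround_of_length_le (hA : A.SortedLT) (hB : B.SortedLT)
    (hsep : SplitsAround A.toFinset B.toFinset) (hlen : A.length ≤ B.length) :
    ¬ (entry A s < entry B s ∧ entry B s < entry A (s + 1) ∧
      entry A (s + 1) < entry B (s + 1)) := by
  rintro ⟨h₁, h₂, h₃⟩
  have hsA : s + 1 < A.length := lt_length_of_entry_lt h₃
  have hsB : s < B.length := lt_length_of_entry_lt h₂
  rw [entry_of_lt hsB] at h₁ h₂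
  rw [entry_of_lt hsA] at h₂ h₃
  set a := A[s + 1]
  set b := B[s]
  have haA : a ∈ A.toFinset := List.mem_toFinset.mpr (List.getElem_mem hsA)
  have haB : a ∉ B.toFinset := by
    simpa using hB.not_mem_of_entry_lt (by rwa [entry_of_lt hsB]) h₃
  have hbB : b ∈ B.toFinset := List.mem_toFinset.mpr (List.getElem_mem hsB)
  have hbA : b ∉ A.toFinset := by
    simpa using hA.not_mem_of_entry_lt h₁ (by rwa [entry_of_lt hsA])
  have hba : b < a := by exact_mod_cast h₂
  -- `a ∈ A \ B` lies above `b ∈ B \ A`, hence above all of `B \ A`; but below `a` the list `A`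
  -- has one entry more than `B`, which `A \ B` cannot make up for
  have hall : ∀ y ∈ B.toFinset \ A.toFinset, y < a := by
    refine (hsep a (mem_sdiff.mpr ⟨haA, haB⟩)).resolve_left fun h => ?_
    exact absurd (h b (mem_sdiff.mpr ⟨hbB, hbA⟩)) (not_lt.mpr hba.le)
  have hcA : #(A.toFinset.filter (· ≤ a)) = s + 2 :=
    hA.card_filter_le_of_entry (entry_of_lt hsA).le
      (entry_of_lt hsA ▸ hA.entry_lt_entry_succ hsA)
  have hcB : #(B.toFinset.filter (· ≤ a)) = s + 1 :=
    hB.card_filter_le_of_entry (by rw [entry_of_lt hsB]; exact_mod_cast hba.le) h₃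
  have hcount := card_filter_add_card_filter_sdiff A.toFinset B.toFinset (· ≤ a)
  rw [union_comm, ← card_filter_add_card_filter_sdiff B.toFinset A.toFinset,
    filter_true_of_mem fun y hy => (hall y hy).le] at hcount
  have hsdiff : #(A.toFinset \ B.toFinset) ≤ #(B.toFinset \ A.toFinset) := by
    rw [card_sdiff_le_card_sdiff_iff, List.toFinset_card_of_nodup hA.nodup,
      List.toFinset_card_of_nodup hB.nodup]
    exact hlen
  have := card_filter_le (A.toFinset \ B.toFinset) (· ≤ a)
  omega

lemma pairNonCrossing_entry_of_splitsAround (hA : A.SortedLT) (hB : B.SortedLT)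
    (hsep : SplitsAround A.toFinset B.toFinset) (hlen : A.length ≤ B.length) :
    PairNonCrossing (entry A s) (entry A (s + 1)) (entry B s) (entry B (s + 1)) :=
  ⟨not_entry_interleaved_of_splitsAround hA hB hsep,
    not_entry_interleaved_of_splitsAround_of_length_le hA hB hsep hlen⟩

end Interleaving

def ListsWeaklySeparated (A B : List ℕ) : Prop :=
  (A.length ≤ B.length ∧ SplitsAround A.toFinset B.toFinset) ∨
    (B.length ≤ A.length ∧ SplitsAround B.toFinset A.toFinset)

lemma ListsWeaklySeparated.symm {A B : List ℕ} (h : ListsWeaklySeparated A B) :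
    ListsWeaklySeparated B A :=
  Or.symm h

lemma WeaklySeparated.listsWeaklySeparated {I J : Finset ℕ} (h : WeaklySeparated I J) :
    ListsWeaklySeparated (sortedList I) (sortedList J) := by
  simp only [ListsWeaklySeparated, sortedList, length_sort, sort_toFinset]
  rcases h with ⟨hcard, J₁, J₂, -, hsplit, h₁, h₂⟩ | ⟨hcard, I₁, I₂, -, hsplit, h₁, h₂⟩
  · exact .inr ⟨hcard, splitsAround_of_precedes hsplit h₁ h₂⟩
  · exact .inl ⟨hcard, splitsAround_of_precedes hsplit h₁ h₂⟩

lemma pairNonCrossing_entry_of_listsWeaklySeparated {A B : List ℕ} (hA : A.SortedLT)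
    (hB : B.SortedLT) (h : ListsWeaklySeparated A B) (s : ℕ) :
    PairNonCrossing (entry A s) (entry A (s + 1)) (entry B s) (entry B (s + 1)) := by
  rcases h with ⟨hlen, hsep⟩ | ⟨hlen, hsep⟩
  · exact pairNonCrossing_entry_of_splitsAround hA hB hsep hlen
  · exact (pairNonCrossing_entry_of_splitsAround hB hA hsep hlen).symm

lemma toFinset_eraseIdx_sdiff_subset {A B : List ℕ} (hA : A.Nodup) {s : ℕ} (hsA : s < A.length)
    (hsB : s < B.length) (h : A[s] = B[s]) :
    (A.eraseIdx s).toFinset \ (B.eraseIdx s).toFinset ⊆ A.toFinset \ B.toFinset := by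
  intro x hx
  simp only [mem_sdiff, List.mem_toFinset, List.mem_eraseIdx_iff_getElem] at hx ⊢
  obtain ⟨⟨i, hi, his, rfl⟩, hnot⟩ := hx
  refine ⟨List.getElem_mem hi, fun hmem => ?_⟩
  obtain ⟨j, hj, hji⟩ := List.mem_iff_getElem.mp hmem
  by_cases hjs : j = s
  · subst hjs
    exact his ((hA.getElem_inj_iff).mp (h.trans hji).symm)
  · exact hnot ⟨j, hj, hjs, hji⟩

lemma ListsWeaklySeparated.eraseIdx {A B : List ℕ} (hA : A.Nodup) (hB : B.Nodup) {s : ℕ}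
    (hsA : s < A.length) (hsB : s < B.length) (h : A[s] = B[s])
    (hw : ListsWeaklySeparated A B) : ListsWeaklySeparated (A.eraseIdx s) (B.eraseIdx s) := by
  have hA' := toFinset_eraseIdx_sdiff_subset hA hsA hsB h
  have hB' := toFinset_eraseIdx_sdiff_subset hB hsB hsA h.symm
  simp only [ListsWeaklySeparated, List.length_eraseIdx_of_lt hsA,
    List.length_eraseIdx_of_lt hsB]
  rcases hw with ⟨hlen, hsep⟩ | ⟨hlen, hsep⟩
  · exact .inl ⟨by omega, hsep.mono hA' hB'⟩
  · exact .inr ⟨by omega, hsep.mono hB' hA'⟩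

lemma stripOnce_eq_some {A B A' B' : List ℕ} (h : stripOnce A B = some (A', B')) :
    ∃ s, ∃ (hsA : s < A.length) (hsB : s < B.length),
      A[s] = B[s] ∧ A' = A.eraseIdx s ∧ B' = B.eraseIdx s := by
  obtain ⟨s, hfind, heq⟩ := Option.map_eq_some_iff.mp h
  have hs := List.mem_range.mp (List.mem_of_find?_eq_some hfind)
  have hsA : s < A.length := hs.trans_le (min_le_left _ _)
  have hsB : s < B.length := hs.trans_le (min_le_right _ _)
  have hAB := List.find?_some hfind
  rw [beq_iff_eq, List.getD_eq_getElem _ _ hsA, List.getD_eq_getElem _ _ hsB] at hAB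
  obtain ⟨rfl, rfl⟩ := Prod.mk.inj heq
  exact ⟨s, hsA, hsB, hAB, rfl, rfl⟩

lemma strip_induction (P : List ℕ → List ℕ → Prop)
    (step : ∀ A B s (hsA : s < A.length) (hsB : s < B.length), A[s] = B[s] → P A B →
      P (A.eraseIdx s) (B.eraseIdx s))
    {A B : List ℕ} (h : P A B) : P (strip A B).1 (strip A B).2 := by
  suffices ∀ n A B, P A B → P (stripAux n A B).1 (stripAux n A B).2 from this _ _ _ h
  intro n
  induction n with
  | zero => exact fun _ _ h => h
  | succ n ih =>
    intro A B h
    rcases hstrip : stripOnce A B with _ | ⟨A', B'⟩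
    · simpa only [stripAux, hstrip] using h
    · obtain ⟨s, hsA, hsB, hAB, rfl, rfl⟩ := stripOnce_eq_some hstrip
      simpa only [stripAux, hstrip] using ih _ _ (step A B s hsA hsB hAB h)

lemma listsNonCrossing_of_listsWeaklySeparated {A B : List ℕ} (hA : A.SortedLT)
    (hB : B.SortedLT) (h : ListsWeaklySeparated A B) : ListsNonCrossing A B := by
  obtain ⟨hA', hB', h'⟩ := strip_induction
    (fun A B => A.SortedLT ∧ B.SortedLT ∧ ListsWeaklySeparated A B)
    (fun A B s hsA hsB hAB ⟨hA, hB, h⟩ =>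
      ⟨(hA.pairwise.sublist (List.eraseIdx_sublist _ _)).sortedLT,
        (hB.pairwise.sublist (List.eraseIdx_sublist _ _)).sortedLT,
        h.eraseIdx hA.nodup hB.nodup hsA hsB hAB⟩)
    ⟨hA, hB, h⟩
  exact fun s _ => pairNonCrossing_entry_of_listsWeaklySeparated hA' hB' h' s

theorem weaklySeparated_implies_nonCrossing_general (I J : Finset ℕ)
    (hws : WeaklySeparated I J) : SetsNonCrossing I J := by
  have hI : (sortedList I).SortedLT := sortedLT_sort I
  have hJ : (sortedList J).SortedLT := sortedLT_sort J
  unfold SetsNonCrossing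
  split_ifs
  · exact listsNonCrossing_of_listsWeaklySeparated hI hJ hws.listsWeaklySeparated
  · exact listsNonCrossing_of_listsWeaklySeparated hJ hI hws.listsWeaklySeparated.symm

/-- If subsets `I`, `J` of `[m]` are weakly separated, then they are non-crossing. -/
theorem weaklySeparated_implies_nonCrossing (m : ℕ) (I J : Finset ℕ)
    (hI : I ⊆ Finset.Icc 1 m) (hJ : J ⊆ Finset.Icc 1 m)
    (hws : WeaklySeparated I J) : SetsNonCrossing I J :=
  weaklySeparated_implies_nonCrossing_general I J hws
end

section
/- Two subsets I, J of [m] are non-nesting if and only if the associated lattice paths p(I) and p(J) are non-crossing, i.e., one path lies weakly to the northwest of the other along their entire length. -/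
open Finset

/-! Both conditions are entrywise comparisons of the increasing lists `i₀ < i₁ < ⋯` of `I` and
`j₀ < j₁ < ⋯` of `J`, padded with `∞`. Since `i_s ≤ k` iff `s < #{i ∈ I | i ≤ k}`, the path
`p(I)` lies weakly northwest of `p(J)` iff `i_s ≤ j_s` for all `s`. Deleting a common entry at a
common position does not affect such a comparison. Once no position agrees, `i_s - j_s` can only
change sign between `s` and `s + 1` if `i_s < j_s < j_{s+1} < i_{s+1}` or vice versa, which is a
nesting. -/

namespace NonNesting

section Entry

theorem entry_eq (l : List ℕ) (s : ℕ) : entry l s = (l[s]?.map (↑)).getD ⊤ := by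
  simp only [entry, List.pure_def, List.bind_eq_flatMap, ← List.map_eq_flatMap, List.map_map,
    List.getD_eq_getElem?_getD, List.getElem?_map]
  rfl

theorem entry_of_lt {l : List ℕ} {s : ℕ} (h : s < l.length) : entry l s = l[s] := by
  simp [entry_eq, List.getElem?_eq_getElem h]

theorem entry_of_length_le {l : List ℕ} {s : ℕ} (h : l.length ≤ s) : entry l s = ⊤ := by
  simp [entry_eq, List.getElem?_eq_none h]

theorem entry_cons_succ (a : ℕ) (l : List ℕ) (s : ℕ) :
    entry (a :: l) (s + 1) = entry l s := by
  simp [entry_eq]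

theorem entry_eraseIdx (l : List ℕ) (t s : ℕ) :
    entry (l.eraseIdx t) s = if s < t then entry l s else entry l (s + 1) := by
  rw [entry_eq, List.getElem?_eraseIdx]
  split_ifs <;> rw [entry_eq]

variable {l : List ℕ}

theorem entry_lt_entry_succ_or_eq_top (hl : l.Pairwise (· < ·)) (s : ℕ) :
    entry l s < entry l (s + 1) ∨ entry l (s + 1) = ⊤ := by
  rcases lt_or_ge (s + 1) l.length with h | h
  · left
    rw [entry_of_lt (by omega), entry_of_lt h]
    exact_mod_cast List.pairwise_iff_getElem.mp hl s (s + 1) (by omega) h (by omega)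
  · exact Or.inr (entry_of_length_le h)

theorem entry_le_coe_iff (hl : l.Pairwise (· < ·)) (s k : ℕ) :
    entry l s ≤ k ↔ s < l.countP (· ≤ k) := by
  induction l generalizing s with
  | nil => simp [entry_of_length_le]
  | cons a t ih =>
    rw [List.pairwise_cons] at hl
    by_cases hak : a ≤ k
    · cases s with
      | zero => simp [entry_of_lt, hak]
      | succ s => simp [entry_cons_succ, ← ih hl.2, hak]
    · have hzero : t.countP (· ≤ k) = 0 := by
        simp only [List.countP_eq_zero, decide_eq_true_eq, not_le]
        exact fun x hx => by grind
      cases s with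
      | zero => simp [entry_of_lt, hak, hzero]
      | succ s => simp [entry_cons_succ, ih hl.2, hak, hzero]

theorem forall_countP_le_iff {A B : List ℕ} (hA : A.Pairwise (· < ·))
    (hB : B.Pairwise (· < ·)) :
    (∀ k, B.countP (· ≤ k) ≤ A.countP (· ≤ k)) ↔ ∀ s, entry A s ≤ entry B s := by
  constructor
  · intro h s
    rcases lt_or_ge s B.length with hs | hs
    · rw [entry_of_lt hs, entry_le_coe_iff hA]
      exact ((entry_le_coe_iff hB s _).mp (entry_of_lt hs).le).trans_le (h _)
    · simp [entry_of_length_le hs]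
  · intro h k
    by_contra! hlt
    have hB_le := (entry_le_coe_iff hB _ k).mpr hlt
    exact (lt_irrefl _) ((entry_le_coe_iff hA _ k).mp ((h _).trans hB_le))

end Entry

theorem sortedList_pairwise (I : Finset ℕ) : (sortedList I).Pairwise (· < ·) :=
  List.sortedLT_iff_pairwise.mp (Finset.sortedLT_sort I)

theorem length_sortedList (I : Finset ℕ) : (sortedList I).length = I.card :=
  Finset.length_sort _

theorem northCount_eq_countP (I : Finset ℕ) (k : ℕ) :
    northCount I k = (sortedList I).countP (· ≤ k) := by
  rw [northCount, Finset.card, Finset.filter_val, ← Multiset.countP_eq_card_filter,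
    ← Finset.sort_eq I (· ≤ ·), Multiset.coe_countP]
  rfl

theorem forall_northCount_le_iff (I J : Finset ℕ) :
    (∀ k, northCount J k ≤ northCount I k) ↔
      ∀ s, entry (sortedList I) s ≤ entry (sortedList J) s := by
  simp only [northCount_eq_countP]
  exact forall_countP_le_iff (sortedList_pairwise I) (sortedList_pairwise J)

section Strip

theorem exists_of_stripOnce_eq_some {A B A' B' : List ℕ}
    (h : stripOnce A B = some (A', B')) :
    ∃ t, t < A.length ∧ t < B.length ∧ entry A t = entry B t ∧
      A' = A.eraseIdx t ∧ B' = B.eraseIdx t := by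
  rw [stripOnce, Option.map_eq_some_iff] at h
  obtain ⟨t, hfind, heq⟩ := h
  have ht := List.mem_range.mp (List.mem_of_find?_eq_some hfind)
  have hA : t < A.length := by omega
  have hB : t < B.length := by omega
  have hAB := List.find?_some hfind
  simp only [List.getD_eq_getElem?_getD, List.getElem?_eq_getElem hA,
    List.getElem?_eq_getElem hB, Option.getD_some, beq_iff_eq] at hAB
  simp only [Prod.mk.injEq] at heq
  exact ⟨t, hA, hB, by rw [entry_of_lt hA, entry_of_lt hB, hAB], heq.1.symm, heq.2.symm⟩

theorem entry_ne_of_stripOnce_eq_none {A B : List ℕ} (h : stripOnce A B = none)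
    (hlen : A.length ≤ B.length) {s : ℕ} (hs : s < B.length) : entry A s ≠ entry B s := by
  rw [entry_of_lt hs]
  rcases lt_or_ge s A.length with hsA | hsA
  · rw [stripOnce, Option.map_eq_none_iff, List.find?_eq_none] at h
    have := h s (List.mem_range.mpr (by omega))
    simp_all [entry_of_lt, List.getD_eq_getElem?_getD]
  · simp [entry_of_length_le hsA]

theorem stripAux_induction (P : List ℕ → List ℕ → Prop)
    (step : ∀ A B t, t < A.length → t < B.length → entry A t = entry B t →
      P A B → P (A.eraseIdx t) (B.eraseIdx t))
    (n : ℕ) {A B : List ℕ} (hAB : P A B) : P (stripAux n A B).1 (stripAux n A B).2 := by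
  induction n generalizing A B with
  | zero => exact hAB
  | succ n ih =>
    rcases hso : stripOnce A B with _ | ⟨A', B'⟩
    · simpa [stripAux, hso] using hAB
    · obtain ⟨t, hA, hB, heq, rfl, rfl⟩ := exists_of_stripOnce_eq_some hso
      simpa [stripAux, hso] using ih (step A B t hA hB heq hAB)

theorem strip_induction (P : List ℕ → List ℕ → Prop)
    (step : ∀ A B t, t < A.length → t < B.length → entry A t = entry B t →
      P A B → P (A.eraseIdx t) (B.eraseIdx t)) {A B : List ℕ} (h : P A B) :
    P (strip A B).1 (strip A B).2 :=
  stripAux_induction P step _ h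

theorem stripOnce_stripAux_eq_none {n : ℕ} {A : List ℕ} (B : List ℕ) (h : A.length ≤ n) :
    stripOnce (stripAux n A B).1 (stripAux n A B).2 = none := by
  induction n generalizing A B with
  | zero => simp [List.length_eq_zero_iff.mp (Nat.le_zero.mp h), stripAux, stripOnce]
  | succ n ih =>
    rcases hso : stripOnce A B with _ | ⟨A', B'⟩
    · simp [stripAux, hso]
    · obtain ⟨t, hA, -, -, rfl, rfl⟩ := exists_of_stripOnce_eq_some hso
      simpa [stripAux, hso] using ih _ (by rw [List.length_eraseIdx_of_lt hA]; omega)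

theorem forall_entry_rel_eraseIdx_iff (r : WithTop ℕ → WithTop ℕ → Prop) [Std.Refl r]
    {A B : List ℕ} {t : ℕ} (hAB : entry A t = entry B t) :
    (∀ s, r (entry (A.eraseIdx t) s) (entry (B.eraseIdx t) s)) ↔
      ∀ s, r (entry A s) (entry B s) := by
  simp only [entry_eraseIdx]
  constructor
  · intro h s
    rcases lt_trichotomy s t with hst | rfl | hst
    · simpa [hst] using h s
    · exact hAB ▸ Std.Refl.refl _
    · obtain ⟨u, rfl⟩ := Nat.exists_eq_add_of_lt hst
      simpa [show ¬ t + u < t by omega] using h (t + u)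
  · intro h s
    split_ifs
    exacts [h s, h (s + 1)]

theorem forall_entry_rel_strip_iff (r : WithTop ℕ → WithTop ℕ → Prop) [Std.Refl r]
    {A B : List ℕ} :
    (∀ s, r (entry (strip A B).1 s) (entry (strip A B).2 s)) ↔
      ∀ s, r (entry A s) (entry B s) :=
  strip_induction
    (fun A' B' => (∀ s, r (entry A' s) (entry B' s)) ↔ ∀ s, r (entry A s) (entry B s))
    (fun _ _ _ _ _ hAB h => (forall_entry_rel_eraseIdx_iff r hAB).trans h) Iff.rfl

end Strip

section Pairs

theorem pairNonNesting_comm {u v x y : WithTop ℕ} :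
    PairNonNesting u v x y ↔ PairNonNesting x y u v :=
  and_comm

theorem _root_.PairNonNesting.lt_of_lt {u v x y : WithTop ℕ} (h : PairNonNesting u v x y)
    (hux : u < x) (hxy : x < y ∨ y = ⊤) (hvy : v ≠ y) : v < y := by
  rcases hxy with hxy | rfl
  · exact (lt_or_gt_of_ne hvy).resolve_right fun hyv => h.2 ⟨hux, hxy, hyv⟩
  · exact lt_top_iff_ne_top.mpr hvy

variable {a b : ℕ → WithTop ℕ} {n : ℕ}

theorem forall_le_of_pairNonNesting (hb : ∀ s, b s < b (s + 1) ∨ b (s + 1) = ⊤)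
    (hb_top : ∀ s, n ≤ s → b s = ⊤) (hne : ∀ s < n, a s ≠ b s)
    (hnn : ∀ s, s + 1 < n → PairNonNesting (a s) (a (s + 1)) (b s) (b (s + 1)))
    (h₀ : a 0 < b 0) : ∀ s, a s ≤ b s := by
  have hlt : ∀ s < n, a s < b s := by
    intro s
    induction s with
    | zero => exact fun _ => h₀
    -- `a s < b s` and `b (s + 1) < a (s + 1)` would make the two pairs nest
    | succ s ih => exact fun hs => (hnn s hs).lt_of_lt (ih (by omega)) (hb s) (hne _ hs)
  intro s
  rcases lt_or_ge s n with hs | hs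
  · exact (hlt s hs).le
  · simp [hb_top s hs]

theorem pairNonNesting_iff (ha : ∀ s, a s < a (s + 1) ∨ a (s + 1) = ⊤)
    (hb : ∀ s, b s < b (s + 1) ∨ b (s + 1) = ⊤)
    (ha_top : ∀ s, n ≤ s → a s = ⊤) (hb_top : ∀ s, n ≤ s → b s = ⊤)
    (hne : ∀ s < n, a s ≠ b s) :
    (∀ s, s + 1 < n → PairNonNesting (a s) (a (s + 1)) (b s) (b (s + 1))) ↔
      (∀ s, a s ≤ b s) ∨ (∀ s, b s ≤ a s) := by
  constructor
  · intro hnn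
    rcases Nat.eq_zero_or_pos n with rfl | hn
    · exact Or.inl fun s => by simp [hb_top s (Nat.zero_le s)]
    rcases lt_or_gt_of_ne (hne 0 hn) with h₀ | h₀
    · exact Or.inl (forall_le_of_pairNonNesting hb hb_top hne hnn h₀)
    · exact Or.inr (forall_le_of_pairNonNesting ha ha_top (fun s hs => (hne s hs).symm)
        (fun s hs => pairNonNesting_comm.mp (hnn s hs)) h₀)
  · rintro (h | h) s -
    · exact ⟨fun h' => (h s).not_gt h'.1, fun h' => (h (s + 1)).not_gt h'.2.2⟩
    · exact ⟨fun h' => (h (s + 1)).not_gt h'.2.2, fun h' => (h s).not_gt h'.1⟩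

end Pairs

theorem listsNonNesting_iff {A B : List ℕ} (hA : A.Pairwise (· < ·)) (hB : B.Pairwise (· < ·))
    (hlen : A.length ≤ B.length) :
    ListsNonNesting A B ↔
      (∀ s, entry A s ≤ entry B s) ∨ (∀ s, entry B s ≤ entry A s) := by
  have hA' : (strip A B).1.Pairwise (· < ·) :=
    strip_induction (fun A _ => A.Pairwise (· < ·))
      (fun _ _ _ _ _ _ h => h.sublist (List.eraseIdx_sublist _ _)) hA
  have hB' : (strip A B).2.Pairwise (· < ·) :=
    strip_induction (fun _ B => B.Pairwise (· < ·))
      (fun _ _ _ _ _ _ h => h.sublist (List.eraseIdx_sublist _ _)) hB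
  have hlen' : (strip A B).1.length ≤ (strip A B).2.length :=
    strip_induction (fun A B => A.length ≤ B.length)
      (fun _ _ _ hA hB _ h => by
        simp only [List.length_eraseIdx_of_lt hA, List.length_eraseIdx_of_lt hB]; omega) hlen
  have hnone : stripOnce (strip A B).1 (strip A B).2 = none :=
    stripOnce_stripAux_eq_none B le_rfl
  rw [ListsNonNesting, pairNonNesting_iff (entry_lt_entry_succ_or_eq_top hA')
    (entry_lt_entry_succ_or_eq_top hB') (fun _ hs => entry_of_length_le (hlen'.trans hs))
    (fun _ hs => entry_of_length_le hs) (fun _ hs => entry_ne_of_stripOnce_eq_none hnone hlen' hs)]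
  exact or_congr (forall_entry_rel_strip_iff (· ≤ ·)) (forall_entry_rel_strip_iff (· ≥ ·))

theorem listsNonNesting_sortedList_iff {I J : Finset ℕ} (h : I.card ≤ J.card) :
    ListsNonNesting (sortedList I) (sortedList J) ↔ PathsNonCrossing I J := by
  rw [listsNonNesting_iff (sortedList_pairwise I) (sortedList_pairwise J)
    (by simpa only [length_sortedList] using h), PathsNonCrossing, forall_northCount_le_iff,
    forall_northCount_le_iff]

end NonNesting

open NonNesting in
theorem nonNesting_iff_paths_nonCrossing_general (I J : Finset ℕ) :
    SetsNonNesting I J ↔ PathsNonCrossing I J := by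
  rw [SetsNonNesting]
  split_ifs with h
  · exact listsNonNesting_sortedList_iff h
  · rw [listsNonNesting_sortedList_iff (le_of_not_ge h), PathsNonCrossing, PathsNonCrossing,
      or_comm]

/-- Subsets `I`, `J` of `[m]` are non-nesting if and only if the associated lattice
paths `p(I)`, `p(J)` are non-crossing, i.e. one path lies weakly to the northwest
of the other along their entire length. -/
theorem nonNesting_iff_paths_nonCrossing (m : ℕ) (I J : Finset ℕ)
    (hI : I ⊆ Finset.Icc 1 m) (hJ : J ⊆ Finset.Icc 1 m) :
    SetsNonNesting I J ↔ PathsNonCrossing I J :=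
  nonNesting_iff_paths_nonCrossing_general I J
end

section
/- Two subsets I, J of [m] are non-crossing if and only if the associated lattice paths p(I) and p(J) are non-kissing: at every proper common part (a maximal shared connected subpath containing neither the common source nor an endpoint), the two paths leave in the same relative direction as they entered (i.e., every proper common part is a crossing, not a kiss). -/
open Finset

/-!
The heights `northCount I k` and `northCount J k` of the two paths change by at most one per step,
so a proper common part is a maximal run of steps on which they agree. The entries that `strip`
deletes are the north steps both paths take from the same node (`sharedNorthSteps`); deleting them
changes neither the difference of the heights nor the common parts, and afterwards neither path has
a north step inside a common part. Since the `s`-th element of a sorted set is the step at which its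
path reaches height `s + 1`, a pattern `x < u < y < v` at position `s` is then exactly a common part
`[u, y - 1]` at height `s + 1` that the path of `{u, v}` enters from the south and leaves to the
east: a kiss.
-/

section NorthCount

variable {S : Finset ℕ} {k : ℕ}

theorem northCount_succ (S : Finset ℕ) (k : ℕ) :
    northCount S (k + 1) = northCount S k + if k + 1 ∈ S then 1 else 0 := by
  have hsplit : S.filter (· ≤ k + 1) = S.filter (· ≤ k) ∪ S.filter (· = k + 1) := by
    ext i; simp only [Finset.mem_filter, Finset.mem_union, Nat.le_succ_iff, and_or_left]
  rw [northCount, northCount, hsplit, Finset.card_union_of_disjoint, Finset.filter_eq']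
  · split_ifs <;> simp
  · exact Finset.disjoint_filter.2 fun i _ hi h => by omega

theorem northCount_succ_of_mem (h : k + 1 ∈ S) : northCount S (k + 1) = northCount S k + 1 := by
  rw [northCount_succ, if_pos h]

theorem northCount_succ_of_notMem (h : k + 1 ∉ S) : northCount S (k + 1) = northCount S k := by
  rw [northCount_succ, if_neg h, add_zero]

theorem one_le_northCount_of_mem (hk : k ∈ S) : 1 ≤ northCount S k :=
  Finset.card_pos.2 ⟨k, Finset.mem_filter.2 ⟨hk, le_rfl⟩⟩

theorem northCount_mono (S : Finset ℕ) : Monotone (northCount S) := fun _ _ h =>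
  Finset.card_le_card (Finset.monotone_filter_right S fun _ _ hi => le_trans hi h)

theorem northCount_sdiff_add {C : Finset ℕ} (hC : C ⊆ S) (k : ℕ) :
    northCount (S \ C) k + northCount C k = northCount S k := by
  rw [northCount, northCount, northCount, ← Finset.card_union_of_disjoint, ← Finset.filter_union,
    Finset.sdiff_union_of_subset hC]
  exact Finset.sdiff_disjoint.mono (Finset.filter_subset _ _) (Finset.filter_subset _ _)

end NorthCount

section Entry

variable {L : List ℕ} {s : ℕ}

-- The coercion in `entry` elaborates through the list monad; this is the usable form.
theorem entry_eq (L : List ℕ) (s : ℕ) : entry L s = (L[s]?.map (↑)).getD ⊤ := by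
  simp [entry, List.getD_eq_getElem?_getD, ← List.map_eq_flatMap]
  rfl

theorem entry_eq_top_iff : entry L s = ⊤ ↔ L.length ≤ s := by
  rw [entry_eq, ← List.getElem?_eq_none_iff]
  cases L[s]? <;> simp

theorem entry_of_lt_s7 (h : s < L.length) : entry L s = L[s] := by
  rw [entry_eq, List.getElem?_eq_getElem h]
  rfl

theorem entry_le_coe_iff (hL : L.Pairwise (· < ·)) (s k : ℕ) :
    entry L s ≤ k ↔ s + 1 ≤ L.countP (· ≤ k) := by
  induction L generalizing s with
  | nil => simp [entry]
  | cons a L ih =>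
    obtain ⟨ha, hL⟩ := List.pairwise_cons.mp hL
    by_cases hak : a ≤ k
    · cases s with
      | zero => simp [entry, hak]
      | succ s => simpa [entry, hak] using ih hL s
    · have hgt : ∀ b ∈ L, k < b := fun b hb => by have := ha b hb; omega
      have hzero : L.countP (· ≤ k) = 0 :=
        List.countP_eq_zero.2 fun b hb => by simpa using hgt b hb
      cases s with
      | zero => simpa [entry, hak] using hgt
      | succ s => simpa [entry, hak, hzero] using ih hL s

end Entry

section SortedList

variable {S : Finset ℕ} {s k : ℕ}

theorem length_sortedList (S : Finset ℕ) : (sortedList S).length = S.card :=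
  Finset.length_sort _

theorem nodup_sortedList (S : Finset ℕ) : (sortedList S).Nodup :=
  Finset.sort_nodup _ _

theorem sortedList_erase (S : Finset ℕ) (k : ℕ) :
    (sortedList S).erase k = sortedList (S.erase k) := by
  refine List.Perm.eq_of_pairwise' ((Finset.pairwise_sort _ _).sublist List.erase_sublist)
    (Finset.pairwise_sort _ _) ?_
  rw [← Multiset.coe_eq_coe, ← Multiset.coe_erase, sortedList, sortedList, Finset.sort_eq,
    Finset.sort_eq, Finset.erase_val]

theorem northCount_eq_countP (S : Finset ℕ) (k : ℕ) :
    northCount S k = (sortedList S).countP (· ≤ k) := by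
  rw [northCount, Finset.card_def, Finset.filter_val, ← Finset.sort_eq S (· ≤ ·),
    Multiset.filter_coe, Multiset.coe_card, List.countP_eq_length_filter]
  rfl

theorem entry_sortedList_le_iff (S : Finset ℕ) (s k : ℕ) :
    entry (sortedList S) s ≤ k ↔ s + 1 ≤ northCount S k :=
  northCount_eq_countP S k ▸ entry_le_coe_iff (Finset.sortedLT_sort S).pairwise s k

theorem coe_lt_entry_sortedList_iff (S : Finset ℕ) (s k : ℕ) :
    (k : WithTop ℕ) < entry (sortedList S) s ↔ northCount S k ≤ s := by
  rw [← not_le, entry_sortedList_le_iff]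
  omega

theorem entry_sortedList_ne_top_iff : entry (sortedList S) s ≠ ⊤ ↔ s < S.card := by
  rw [Ne, entry_eq_top_iff, length_sortedList]
  omega

theorem mem_and_northCount_of_entry_sortedList_eq (h : entry (sortedList S) s = k) :
    k ∈ S ∧ northCount S k = s + 1 := by
  have hs : s < (sortedList S).length := by
    rw [length_sortedList, ← entry_sortedList_ne_top_iff, h]
    exact WithTop.coe_ne_top
  have hk : (sortedList S)[s] = k := by exact_mod_cast (entry_of_lt_s7 hs).symm.trans h
  refine ⟨Finset.mem_sort _ |>.1 (hk ▸ List.getElem_mem hs), ?_⟩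
  have hle : s + 1 ≤ northCount S k := (entry_sortedList_le_iff S s k).1 h.le
  by_contra hne
  have hnext : entry (sortedList S) (s + 1) ≤ k := (entry_sortedList_le_iff S _ k).2 (by omega)
  have hs' : s + 1 < (sortedList S).length := by
    rw [length_sortedList, ← entry_sortedList_ne_top_iff]
    exact ne_top_of_le_ne_top WithTop.coe_ne_top hnext
  rw [entry_of_lt_s7 hs', ← hk, Nat.cast_le] at hnext
  exact (List.pairwise_iff_getElem.1 (Finset.sortedLT_sort S).pairwise s (s + 1) hs hs'
    (Nat.lt_succ_self s)).not_ge hnext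

theorem entry_sortedList_eq_coe_iff :
    entry (sortedList S) s = k ↔ k ∈ S ∧ northCount S k = s + 1 := by
  refine ⟨mem_and_northCount_of_entry_sortedList_eq, fun ⟨hk, hcount⟩ => ?_⟩
  obtain ⟨i, hi, rfl⟩ := List.mem_iff_getElem.1 (Finset.mem_sort (· ≤ ·) |>.2 hk)
  have := (mem_and_northCount_of_entry_sortedList_eq (entry_of_lt_s7 hi)).2
  exact (show i = s by omega) ▸ entry_of_lt_s7 hi

end SortedList

section Strip

variable {C I J : Finset ℕ}

-- The north steps that `p(I)` and `p(J)` take from the same node; in the sorted lists these are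
-- the equal entries in equal positions, i.e. what `strip` removes.
def sharedNorthSteps (I J : Finset ℕ) : Finset ℕ :=
  (I ∩ J).filter fun k => northCount I k = northCount J k

theorem mem_sharedNorthSteps {k : ℕ} :
    k ∈ sharedNorthSteps I J ↔ k ∈ I ∧ k ∈ J ∧ northCount I k = northCount J k := by
  simp [sharedNorthSteps, and_assoc]

theorem sharedNorthSteps_comm (I J : Finset ℕ) : sharedNorthSteps I J = sharedNorthSteps J I := by
  ext k
  simp only [mem_sharedNorthSteps]
  tauto

theorem sharedNorthSteps_subset_inter (I J : Finset ℕ) : sharedNorthSteps I J ⊆ I ∩ J :=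
  Finset.filter_subset _ _

theorem northCount_sdiff_eq_iff (hC : C ⊆ I ∩ J) (k : ℕ) :
    northCount (I \ C) k = northCount (J \ C) k ↔ northCount I k = northCount J k := by
  have hI := northCount_sdiff_add (hC.trans Finset.inter_subset_left) k
  have hJ := northCount_sdiff_add (hC.trans Finset.inter_subset_right) k
  omega

theorem sharedNorthSteps_sdiff (hC : C ⊆ I ∩ J) :
    sharedNorthSteps (I \ C) (J \ C) = sharedNorthSteps I J \ C := by
  ext k
  simp only [mem_sharedNorthSteps, Finset.mem_sdiff, northCount_sdiff_eq_iff hC]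
  tauto

theorem getD_sortedList_eq_iff {s : ℕ} (hI : s < (sortedList I).length)
    (hJ : s < (sortedList J).length) :
    (sortedList I).getD s 0 = (sortedList J).getD s 0 ↔
      (sortedList I)[s] ∈ sharedNorthSteps I J := by
  have hIs := mem_and_northCount_of_entry_sortedList_eq (entry_of_lt_s7 hI)
  have hJs := mem_and_northCount_of_entry_sortedList_eq (entry_of_lt_s7 hJ)
  rw [List.getD_eq_getElem _ _ hI, List.getD_eq_getElem _ _ hJ, mem_sharedNorthSteps]
  constructor
  · intro h
    exact ⟨hIs.1, h ▸ hJs.1, by rw [hIs.2, h, hJs.2]⟩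
  · rintro ⟨-, hJk, hcount⟩
    have := entry_sortedList_eq_coe_iff.2 ⟨hJk, hcount ▸ hIs.2⟩
    exact_mod_cast this.symm.trans (entry_of_lt_s7 hJ)

theorem stripOnce_sortedList (I J : Finset ℕ) :
    stripOnce (sortedList I) (sortedList J) = none ∧ sharedNorthSteps I J = ∅ ∨
      ∃ k ∈ sharedNorthSteps I J, stripOnce (sortedList I) (sortedList J) =
        some (sortedList (I \ {k}), sortedList (J \ {k})) := by
  unfold stripOnce
  rcases hfind : List.find? _ _ with _ | s
  · refine Or.inl ⟨rfl, Finset.eq_empty_of_forall_notMem fun k hk => ?_⟩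
    obtain ⟨hkI, hkJ, hcount⟩ := mem_sharedNorthSteps.1 hk
    have hpos := one_le_northCount_of_mem hkI
    set s := northCount I k - 1
    have hI := entry_sortedList_eq_coe_iff.2 ⟨hkI, (by omega : northCount I k = s + 1)⟩
    have hsI : s < (sortedList I).length := by
      have : northCount I k ≤ I.card := Finset.card_filter_le _ _
      rw [length_sortedList]
      omega
    have hsJ : s < (sortedList J).length := by
      have : northCount J k ≤ J.card := Finset.card_filter_le _ _
      rw [length_sortedList]
      omega
    rw [entry_of_lt_s7 hsI, Nat.cast_inj] at hI
    exact List.find?_eq_none.1 hfind s (List.mem_range.2 (lt_min hsI hsJ))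
      (beq_iff_eq.2 ((getD_sortedList_eq_iff hsI hsJ).2 (hI ▸ hk)))
  · have hs := List.mem_range.1 (List.mem_of_find?_eq_some hfind)
    have hI : s < (sortedList I).length := lt_of_lt_of_le hs (min_le_left _ _)
    have hJ : s < (sortedList J).length := lt_of_lt_of_le hs (min_le_right _ _)
    have heq : (sortedList I).getD s 0 = (sortedList J).getD s 0 := by
      simpa using List.find?_some hfind
    have hk := (getD_sortedList_eq_iff hI hJ).1 heq
    rw [List.getD_eq_getElem _ _ hI, List.getD_eq_getElem _ _ hJ] at heq
    refine Or.inr ⟨_, hk, ?_⟩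
    rw [Option.map_some, ← (nodup_sortedList I).erase_getElem s hI,
      ← (nodup_sortedList J).erase_getElem s hJ, ← heq, sortedList_erase, sortedList_erase,
      Finset.sdiff_singleton_eq_erase, Finset.sdiff_singleton_eq_erase]

theorem stripAux_sortedList (n : ℕ) (I J : Finset ℕ) (hn : (sharedNorthSteps I J).card ≤ n) :
    stripAux n (sortedList I) (sortedList J) =
      (sortedList (I \ sharedNorthSteps I J), sortedList (J \ sharedNorthSteps I J)) := by
  induction n generalizing I J with
  | zero => rw [Finset.card_eq_zero.1 (Nat.le_zero.1 hn), stripAux, sdiff_empty, sdiff_empty]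
  | succ n ih =>
    rcases stripOnce_sortedList I J with ⟨hnone, hempty⟩ | ⟨k, hk, hsome⟩
    · rw [stripAux, hnone, hempty, sdiff_empty, sdiff_empty]
    · have hkC : {k} ⊆ sharedNorthSteps I J := Finset.singleton_subset_iff.2 hk
      have hkIJ := hkC.trans (sharedNorthSteps_subset_inter I J)
      have hcard : (sharedNorthSteps (I \ {k}) (J \ {k})).card ≤ n := by
        rw [sharedNorthSteps_sdiff hkIJ, Finset.card_sdiff_of_subset hkC]
        simpa using hn
      rw [stripAux, hsome]
      dsimp only
      rw [ih _ _ hcard, sharedNorthSteps_sdiff hkIJ, sdiff_sdiff_sdiff_cancel_right hkC,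
        sdiff_sdiff_sdiff_cancel_right hkC]

theorem strip_sortedList (I J : Finset ℕ) :
    strip (sortedList I) (sortedList J) =
      (sortedList (I \ sharedNorthSteps I J), sortedList (J \ sharedNorthSteps I J)) := by
  refine stripAux_sortedList _ I J ?_
  rw [length_sortedList]
  exact Finset.card_le_card ((sharedNorthSteps_subset_inter I J).trans Finset.inter_subset_left)

end Strip

section Paths

variable {m : ℕ} {A B C I J : Finset ℕ} {k₁ k₂ : ℕ}

theorem mem_iff_notMem_of_northCount_eq_iff_ne {k : ℕ}
    (h : northCount I k = northCount J k ↔ northCount I (k + 1) ≠ northCount J (k + 1)) :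
    k + 1 ∈ I ↔ k + 1 ∉ J := by
  rw [northCount_succ, northCount_succ] at h
  split_ifs at h <;> simp_all

theorem ProperCommonPart.symm (h : ProperCommonPart m I J k₁ k₂) : ProperCommonPart m J I k₁ k₂ :=
  let ⟨h₁, h₁₂, h₂, hflat, hleft, hright⟩ := h
  ⟨h₁, h₁₂, h₂, fun k hk₁ hk₂ => (hflat k hk₁ hk₂).symm, hleft.symm, hright.symm⟩

theorem ProperCommonPart.mem_iff_notMem (h : ProperCommonPart m I J k₁ k₂) :
    (k₁ ∈ I ↔ k₁ ∉ J) ∧ (k₂ + 1 ∈ I ↔ k₂ + 1 ∉ J) := by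
  obtain ⟨h₁, h₁₂, -, hflat, hleft, hright⟩ := h
  obtain ⟨j, rfl⟩ := Nat.exists_eq_add_of_le' h₁
  refine ⟨mem_iff_notMem_of_northCount_eq_iff_ne ?_, mem_iff_notMem_of_northCount_eq_iff_ne ?_⟩
  · simpa [hflat (j + 1) le_rfl h₁₂] using hleft
  · simpa [hflat k₂ h₁₂ le_rfl] using hright

theorem properCommonPart_sdiff_iff (hC : C ⊆ I ∩ J) :
    ProperCommonPart m (I \ C) (J \ C) k₁ k₂ ↔ ProperCommonPart m I J k₁ k₂ := by
  simp only [ProperCommonPart, ne_eq, northCount_sdiff_eq_iff hC]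

theorem pathsNonKissing_sdiff_iff (hC : C ⊆ I ∩ J) :
    PathsNonKissing m (I \ C) (J \ C) ↔ PathsNonKissing m I J := by
  refine forall₂_congr fun k₁ k₂ => ?_
  rw [properCommonPart_sdiff_iff hC]
  refine imp_congr_right fun hp => ?_
  have hnot : ∀ k, (k ∈ I ↔ k ∉ J) → k ∉ C := fun k hk hkC =>
    (hk.1 (Finset.mem_inter.1 (hC hkC)).1) (Finset.mem_inter.1 (hC hkC)).2
  simp only [Finset.mem_sdiff, hnot _ hp.mem_iff_notMem.1, hnot _ hp.mem_iff_notMem.2,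
    not_false_eq_true, and_true]

-- `p(A)` enters the common part with a north step and leaves it with an east step
-- (`p(B)` then does the opposite, by `ProperCommonPart.mem_iff_notMem`).
def KissesFromBelow (m : ℕ) (A B : Finset ℕ) : Prop :=
  ∃ k₁ k₂, ProperCommonPart m A B k₁ k₂ ∧ k₁ ∈ A ∧ k₂ + 1 ∉ A

theorem pathsNonKissing_iff_not_kissesFromBelow :
    PathsNonKissing m A B ↔ ¬KissesFromBelow m A B ∧ ¬KissesFromBelow m B A := by
  simp only [PathsNonKissing, KissesFromBelow, not_exists, not_and, not_not, ← forall_and]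
  refine forall₂_congr fun k₁ k₂ => ⟨fun h => ⟨fun hp => ?_, fun hp => ?_⟩, fun h hp => ?_⟩
  · exact (h hp).1
  · have := hp.symm.mem_iff_notMem
    have := h hp.symm
    tauto
  · have := hp.mem_iff_notMem
    have := h.1 hp
    have := h.2 hp.symm
    tauto

end Paths

section Crossing

variable {m : ℕ} {A B I J : Finset ℕ} {s : ℕ}

-- The pattern `x < u < y < v` of `PairNonCrossing`, with `u, v` read from `A` and `x, y` from `B`;
-- the other pattern is `CrossAt B A s`.
def CrossAt (A B : Finset ℕ) (s : ℕ) : Prop :=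
  entry (sortedList B) s < entry (sortedList A) s ∧
    entry (sortedList A) s < entry (sortedList B) (s + 1) ∧
    entry (sortedList B) (s + 1) < entry (sortedList A) (s + 1)

theorem CrossAt.succ_lt_card (h : CrossAt A B s) : s + 1 < B.card :=
  entry_sortedList_ne_top_iff.1 (ne_top_of_lt h.2.2)

theorem listsNonCrossing_sortedList_iff (h : I.card ≤ J.card) :
    ListsNonCrossing (sortedList I) (sortedList J) ↔
      ∀ s, ¬CrossAt (I \ sharedNorthSteps I J) (J \ sharedNorthSteps I J) s ∧
        ¬CrossAt (J \ sharedNorthSteps I J) (I \ sharedNorthSteps I J) s := by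
  have hC := sharedNorthSteps_subset_inter I J
  have hcard : (I \ sharedNorthSteps I J).card ≤ (J \ sharedNorthSteps I J).card := by
    rw [Finset.card_sdiff_of_subset (hC.trans Finset.inter_subset_left),
      Finset.card_sdiff_of_subset (hC.trans Finset.inter_subset_right)]
    omega
  rw [ListsNonCrossing, strip_sortedList, length_sortedList]
  refine forall_congr' fun s => ⟨fun hs => ?_, fun hs _ => hs⟩
  by_cases hlt : s + 1 < (J \ sharedNorthSteps I J).card
  · exact hs hlt
  · exact ⟨fun hx => hlt hx.succ_lt_card, fun hy => hlt (hy.succ_lt_card.trans_le hcard)⟩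

theorem setsNonCrossing_iff_forall_not_crossAt :
    SetsNonCrossing I J ↔
      ∀ s, ¬CrossAt (I \ sharedNorthSteps I J) (J \ sharedNorthSteps I J) s ∧
        ¬CrossAt (J \ sharedNorthSteps I J) (I \ sharedNorthSteps I J) s := by
  unfold SetsNonCrossing
  split_ifs with h
  · exact listsNonCrossing_sortedList_iff h
  · rw [listsNonCrossing_sortedList_iff (not_le.1 h).le, sharedNorthSteps_comm]
    exact forall_congr' fun s => and_comm

end Crossing

section Kissing

variable {m : ℕ} {A B : Finset ℕ} {s : ℕ}

theorem CrossAt.kissesFromBelow (h : CrossAt A B s) (hA : 0 ∉ A) (hB : ∀ b ∈ B, b ≤ m) :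
    KissesFromBelow m A B := by
  obtain ⟨hxu, huy, hyv⟩ := h
  obtain ⟨a, ha⟩ : ∃ a : ℕ, entry (sortedList A) s = a :=
    (WithTop.ne_top_iff_exists.1 (ne_top_of_lt huy)).imp fun _ h => h.symm
  obtain ⟨y, hy⟩ : ∃ y : ℕ, entry (sortedList B) (s + 1) = y :=
    (WithTop.ne_top_iff_exists.1 (ne_top_of_lt hyv)).imp fun _ h => h.symm
  rw [ha] at hxu huy
  rw [hy] at huy hyv
  obtain ⟨haA, hAa⟩ := entry_sortedList_eq_coe_iff.1 ha
  obtain ⟨hyB, hBy⟩ := entry_sortedList_eq_coe_iff.1 hy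
  have hay : a < y := Nat.cast_lt.1 huy
  obtain ⟨j, rfl⟩ := Nat.exists_eq_add_one.2 (Nat.pos_of_ne_zero fun h => hA (h ▸ haA))
  obtain ⟨l, rfl⟩ := Nat.exists_eq_add_one.2 (Nat.zero_lt_of_lt hay)
  have hAj : northCount A j = s := by have := northCount_succ_of_mem haA; omega
  have hBj : s + 1 ≤ northCount B j :=
    (entry_sortedList_le_iff B s j).1 (ENat.lt_natCast_add_one_iff.1 hxu)
  have hBl : northCount B l = s + 1 := by have := northCount_succ_of_mem hyB; omega
  have hAl : northCount A (l + 1) ≤ s + 1 := (coe_lt_entry_sortedList_iff A _ _).1 hyv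
  have hflat : ∀ k, j + 1 ≤ k → k ≤ l → northCount A k = northCount B k := fun k hk₁ hk₂ => by
    have := northCount_mono A hk₁
    have := northCount_mono A (show k ≤ l + 1 by omega)
    have := northCount_mono B (show j ≤ k by omega)
    have := northCount_mono B hk₂
    omega
  refine ⟨j + 1, l, ⟨by omega, by omega, by have := hB _ hyB; omega, hflat,
    show northCount A j ≠ northCount B j by omega, by omega⟩,
    haA, fun hlA => ?_⟩
  have := northCount_succ_of_mem hlA
  have := northCount_mono A (show j + 1 ≤ l by omega)
  omega

theorem northCount_succ_eq_of_sharedNorthSteps_eq_empty (hAB : sharedNorthSteps A B = ∅) {k : ℕ}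
    (h₀ : northCount A k = northCount B k) (h₁ : northCount A (k + 1) = northCount B (k + 1)) :
    northCount A (k + 1) = northCount A k := by
  by_contra hne
  have hA : k + 1 ∈ A := by_contra fun hA => hne (northCount_succ_of_notMem hA)
  have hB : k + 1 ∈ B := by_contra fun hB => by
    have := northCount_succ_of_mem hA
    have := northCount_succ_of_notMem hB
    omega
  exact Finset.notMem_empty _ (hAB ▸ mem_sharedNorthSteps.2 ⟨hA, hB, h₁⟩)

theorem northCount_constant_of_agree (hAB : sharedNorthSteps A B = ∅) {k₁ k₂ : ℕ}
    (hflat : ∀ k, k₁ ≤ k → k ≤ k₂ → northCount A k = northCount B k) :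
    ∀ k, k₁ ≤ k → k ≤ k₂ → northCount A k = northCount A k₁ := by
  intro k hk₁
  induction k, hk₁ using Nat.le_induction with
  | base => exact fun _ => rfl
  | succ k hk ih =>
    intro hk₂
    rw [northCount_succ_eq_of_sharedNorthSteps_eq_empty hAB (hflat k hk (by omega))
      (hflat (k + 1) (by omega) hk₂), ih (by omega)]

theorem KissesFromBelow.exists_crossAt (h : KissesFromBelow m A B)
    (hAB : sharedNorthSteps A B = ∅) : ∃ s, CrossAt A B s := by
  obtain ⟨k₁, k₂, hp, hk₁A, hk₂A⟩ := h
  have hk₁B : k₁ ∉ B := hp.mem_iff_notMem.1.1 hk₁A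
  have hk₂B : k₂ + 1 ∈ B := not_not.1 (hp.mem_iff_notMem.2.not.1 hk₂A)
  obtain ⟨h₁, h₁₂, -, hflat, -, -⟩ := hp
  obtain ⟨j, rfl⟩ := Nat.exists_eq_add_one.2 h₁
  have hAj := northCount_succ_of_mem hk₁A
  have hBj := northCount_succ_of_notMem hk₁B
  have hj := hflat (j + 1) le_rfl h₁₂
  have hk₂ := hflat k₂ h₁₂ le_rfl
  have hAk₂ := northCount_constant_of_agree hAB hflat k₂ h₁₂ le_rfl
  have hA₂ := northCount_succ_of_notMem hk₂A
  have hB₂ := northCount_succ_of_mem hk₂B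
  have hAs : entry (sortedList A) (northCount A j) = (j + 1 : ℕ) :=
    entry_sortedList_eq_coe_iff.2 ⟨hk₁A, hAj⟩
  have hBs : entry (sortedList B) (northCount A j + 1) = (k₂ + 1 : ℕ) :=
    entry_sortedList_eq_coe_iff.2 ⟨hk₂B, by omega⟩
  refine ⟨northCount A j, ?_, ?_, ?_⟩
  · rw [hAs]
    exact lt_of_le_of_ne ((entry_sortedList_le_iff B _ _).2 (by omega))
      fun h => hk₁B (entry_sortedList_eq_coe_iff.1 h).1
  · rw [hAs, hBs]
    exact Nat.cast_lt.2 (by omega)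
  · rw [hBs]
    exact (coe_lt_entry_sortedList_iff A _ _).2 (by omega)

theorem exists_crossAt_iff_kissesFromBelow (hA : 0 ∉ A) (hB : ∀ b ∈ B, b ≤ m)
    (hAB : sharedNorthSteps A B = ∅) :
    (∃ s, CrossAt A B s) ↔ KissesFromBelow m A B :=
  ⟨fun ⟨_, h⟩ => h.kissesFromBelow hA hB, fun h => h.exists_crossAt hAB⟩

theorem pathsNonKissing_iff_forall_not_crossAt (hA : A ⊆ Finset.Icc 1 m) (hB : B ⊆ Finset.Icc 1 m)
    (hAB : sharedNorthSteps A B = ∅) :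
    PathsNonKissing m A B ↔ ∀ s, ¬CrossAt A B s ∧ ¬CrossAt B A s := by
  have hpos : ∀ S ⊆ Finset.Icc 1 m, 0 ∉ S := fun S hS h => by simpa using hS h
  have hle : ∀ S ⊆ Finset.Icc 1 m, ∀ x ∈ S, x ≤ m := fun S hS x hx => (Finset.mem_Icc.1 (hS hx)).2
  rw [pathsNonKissing_iff_not_kissesFromBelow,
    ← exists_crossAt_iff_kissesFromBelow (hpos A hA) (hle B hB) hAB,
    ← exists_crossAt_iff_kissesFromBelow (hpos B hB) (hle A hA) (sharedNorthSteps_comm A B ▸ hAB),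
    forall_and, not_exists, not_exists]

end Kissing

/-- Subsets `I`, `J` of `[m]` are non-crossing if and only if the associated lattice
paths `p(I)`, `p(J)` are non-kissing: at every proper common part the two paths leave
in the same relative direction in which they entered. -/
theorem nonCrossing_iff_paths_nonKissing (m : ℕ) (I J : Finset ℕ)
    (hI : I ⊆ Finset.Icc 1 m) (hJ : J ⊆ Finset.Icc 1 m) :
    SetsNonCrossing I J ↔ PathsNonKissing m I J := by
  have hC := sharedNorthSteps_subset_inter I J
  rw [setsNonCrossing_iff_forall_not_crossAt, ← pathsNonKissing_sdiff_iff hC,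
    pathsNonKissing_iff_forall_not_crossAt (Finset.sdiff_subset.trans hI)
      (Finset.sdiff_subset.trans hJ) (by rw [sharedNorthSteps_sdiff hC, Finset.sdiff_self])]
end

section
/- The cone GT_L of real-valued Gelfand-Tsetlin patterns of partial staircase shape L equals the nonnegative real span of the indicator patterns T_p, as p ranges over monotone lattice paths from the source to a sink contained in L. -/
open Finset

/-- The unit square with corners `(x,y)`–`(x+1,y+1)` is a cell of `L`:
its northwest or southeast corner is a node of `L`. -/
def CellOfL (m : ℕ) (A : Finset ℕ) (x y : ℤ) : Prop :=
  NodeL m A x (y+1) ∨ NodeL m A (x+1) y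

/-- A cell of `L` is external if not all four of its corners are nodes of `L`. -/
def ExternalCell (m : ℕ) (A : Finset ℕ) (x y : ℤ) : Prop :=
  CellOfL m A x y ∧
    ¬ (NodeL m A x y ∧ NodeL m A (x+1) y ∧ NodeL m A x (y+1) ∧ NodeL m A (x+1) (y+1))

/-- Two external cells are connected: adjacent (horizontally or vertically) and the
separating edge does not lie in `L` (an edge lies in `L` iff both endpoints are nodes). -/
def ConnectedExt (m : ℕ) (A : Finset ℕ) (x y x' y' : ℤ) : Prop :=
  ExternalCell m A x y ∧ ExternalCell m A x' y' ∧
    ((x' = x + 1 ∧ y' = y ∧ ¬ (NodeL m A (x+1) y ∧ NodeL m A (x+1) (y+1))) ∨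
     (x' = x ∧ y' = y + 1 ∧ ¬ (NodeL m A x (y+1) ∧ NodeL m A (x+1) (y+1))))

/-- A real-valued Gelfand–Tsetlin pattern of shape `L`: a filling of the cells of `L`
with nonnegative reals, weakly increasing along rows (west to east) and columns (north
to south), with connected external cells containing equal entries and the external
cells to the west of `L` containing zeroes. -/
def IsGTPatternL (m : ℕ) (A : Finset ℕ) (T : ℤ → ℤ → ℝ) : Prop :=
  (∀ x y, CellOfL m A x y → 0 ≤ T x y) ∧
  (∀ x y, CellOfL m A x y → CellOfL m A (x+1) y → T x y ≤ T (x+1) y) ∧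
  (∀ x y, CellOfL m A x y → CellOfL m A x (y+1) → T x (y+1) ≤ T x y) ∧
  (∀ x y x' y', ConnectedExt m A x y x' y' → T x y = T x' y') ∧
  (∀ y, CellOfL m A (-1) y → T (-1) y = 0)

section Aux

lemma nc_mono (I : Finset ℕ) {k k' : ℕ} (h : k ≤ k') : northCount I k ≤ northCount I k' := by
  apply Finset.card_le_card
  intro i hi
  simp only [Finset.mem_filter] at *
  exact ⟨hi.1, by omega⟩

lemma nc_succ (I : Finset ℕ) (k : ℕ) :
    northCount I (k+1) = northCount I k + (if k+1 ∈ I then 1 else 0) := by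
  classical
  unfold northCount
  have h1 : I.filter (fun i => i ≤ k + 1) = I.filter (fun i => i ≤ k ∨ i = k + 1) :=
    Finset.filter_congr (fun i _ => by constructor <;> (intro; omega))
  rw [h1, Finset.filter_or, Finset.filter_eq']
  rw [Finset.card_union_of_disjoint]
  · congr 1
    split <;> simp
  · simp only [Finset.disjoint_left, Finset.mem_filter]
    rintro a ⟨_, ha⟩
    split <;> simp_all <;> omega

lemma nc_succ_le (I : Finset ℕ) (k : ℕ) : northCount I (k+1) ≤ northCount I k + 1 := by
  rw [nc_succ]; split <;> omega

lemma nc_zero {m : ℕ} {I : Finset ℕ} (hI : I ⊆ Finset.Icc 1 m) : northCount I 0 = 0 := by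
  unfold northCount
  rw [Finset.card_eq_zero, Finset.filter_eq_empty_iff]
  intro i hi
  have := hI hi
  simp at this; omega

lemma nc_le {m : ℕ} {I : Finset ℕ} (hI : I ⊆ Finset.Icc 1 m) (k : ℕ) :
    northCount I k ≤ k := by
  unfold northCount
  calc (I.filter (fun i => i ≤ k)).card ≤ (Finset.Icc 1 k).card := by
        apply Finset.card_le_card
        intro i hi
        simp only [Finset.mem_filter] at hi
        have := hI hi.1
        simp at this ⊢; omega
    _ = k := by rw [Nat.card_Icc]; omega

lemma ncZ_mono (I : Finset ℕ) {a b : ℤ} (h : a ≤ b) : northCountZ I a ≤ northCountZ I b := by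
  unfold northCountZ
  exact_mod_cast nc_mono I (by omega : a.toNat ≤ b.toNat)

lemma ncZ_succ_le (I : Finset ℕ) (a : ℤ) : northCountZ I (a+1) ≤ northCountZ I a + 1 := by
  unfold northCountZ
  have h : (a+1).toNat ≤ a.toNat + 1 := by omega
  calc (northCount I (a+1).toNat : ℤ) ≤ (northCount I (a.toNat + 1) : ℤ) := by
        exact_mod_cast nc_mono I h
    _ ≤ (northCount I a.toNat : ℤ) + 1 := by exact_mod_cast nc_succ_le I a.toNat

lemma Tpat_nonneg (I : Finset ℕ) (x y : ℤ) : 0 ≤ Tpat I x y := by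
  unfold Tpat; split <;> norm_num

lemma Tpat_mono_x (I : Finset ℕ) (x y : ℤ) : Tpat I x y ≤ Tpat I (x+1) y := by
  unfold Tpat
  split
  · rw [if_pos]
    have := ncZ_mono I (by omega : x + y + 1 ≤ x + 1 + y + 1)
    omega
  · split <;> norm_num

lemma Tpat_mono_y (I : Finset ℕ) (x y : ℤ) : Tpat I x (y+1) ≤ Tpat I x y := by
  unfold Tpat
  by_cases h : y + 1 + 1 ≤ northCountZ I (x + (y+1) + 1)
  · rw [if_pos h, if_pos]
    rw [show x + (y+1) + 1 = (x+y+1) + 1 from by ring] at h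
    have h2 := ncZ_succ_le I (x+y+1)
    omega
  · rw [if_neg h]; split <;> norm_num

lemma Tpat_west {m : ℕ} {I : Finset ℕ} (hI : I ⊆ Finset.Icc 1 m) {y : ℤ} (hy : 0 ≤ y) :
    Tpat I (-1) y = 0 := by
  unfold Tpat
  rw [if_neg]
  unfold northCountZ
  have h1 : (northCount I (-1 + y + 1).toNat : ℤ) ≤ y := by
    have := nc_le hI (-1 + y + 1).toNat
    omega
  omega

end Aux
section Geom

variable {m : ℕ} {A : Finset ℕ}

lemma node_mono {x y x' y' : ℤ} (h : NodeL m A x y) (hx0 : 0 ≤ x') (hy0 : 0 ≤ y')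
    (hx : x' ≤ x) (hy : y' ≤ y) : NodeL m A x' y' := by
  obtain ⟨_, _, j, hj, h1, h2⟩ := h
  exact ⟨hx0, hy0, j, hj, by omega, by omega⟩

lemma node_j_le (hA : A ⊆ Finset.range (m+1)) {j : ℕ} (hj : j ∈ A) : j ≤ m := by
  have := hA hj; simp at this; omega

lemma cell_bounds {x y : ℤ} (h : CellOfL m A x y) :
    -1 ≤ x ∧ -1 ≤ y ∧ 0 ≤ x + y + 1 ∧ x + y + 1 ≤ m := by
  rcases h with ⟨hx, hy, j, hj, h1, h2⟩ | ⟨hx, hy, j, hj, h1, h2⟩ <;>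
    refine ⟨by omega, by omega, by omega, by omega⟩

lemma cell_left {x y x' : ℤ} (h : CellOfL m A x y) (hx0 : 0 ≤ x') (hx : x' ≤ x) :
    CellOfL m A x' y := by
  rcases h with h | h
  · exact Or.inl (node_mono h hx0 h.2.1 hx le_rfl)
  · exact Or.inr (node_mono h (by omega) h.2.1 (by omega) le_rfl)

lemma cell_west (hA : A ⊆ Finset.range (m+1)) {x y : ℤ} (h : CellOfL m A x y) (hy : 0 ≤ y) :
    CellOfL m A (-1) y := by
  rcases h with ⟨_, _, j, hj, h1, h2⟩ | ⟨_, _, j, hj, h1, h2⟩ <;>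
  · refine Or.inr ⟨by omega, hy, j, hj, ?_, by omega⟩
    have := node_j_le hA hj
    omega

lemma cell_down {x y y' : ℤ} (h : CellOfL m A x y) (hx : 0 ≤ x) (hy0 : -1 ≤ y')
    (hy : y' ≤ y) : CellOfL m A x y' := by
  rcases h with h | h
  · exact Or.inl (node_mono h hx (by omega) le_rfl (by omega))
  · by_cases h0 : 0 ≤ y'
    · exact Or.inr (node_mono h (by omega) h0 le_rfl (by omega))
    · refine Or.inl (node_mono h hx (by omega) (by omega) ?_)
      have := h.2.1; omega

lemma cell_bottom (hA : A ⊆ Finset.range (m+1)) (hAne : A.Nonempty) :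
    CellOfL m A 0 (-1) := by
  obtain ⟨j, hj⟩ := hAne
  exact Or.inl ⟨le_rfl, by omega, j, hj, by have := node_j_le hA hj; omega, by omega⟩

/-- A cell with no cell to its east and none to its north is on the last diagonal. -/
lemma peak_lemma {x y : ℤ} (h : CellOfL m A x y) (hx : 0 ≤ x) (hy : 0 ≤ y)
    (he : ¬ CellOfL m A (x+1) y) (hn : ¬ CellOfL m A x (y+1)) : x + y + 1 = m := by
  rw [CellOfL, not_or] at he hn
  have hne1 : ¬ NodeL m A (x+1) (y+1) := he.1
  have hne2 : ¬ NodeL m A (x+1+1) y := he.2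
  have hnn1 : ¬ NodeL m A x (y+1+1) := hn.1
  rcases h with ⟨_, _, j, hj, h1, h2⟩ | ⟨_, _, j, hj, h1, h2⟩
  · -- y+1 ≤ j ≤ m - x
    have c1 : ¬ (x + 1 + (j:ℤ) ≤ m) := fun hc => hne1 ⟨by omega, by omega, j, hj, hc, by omega⟩
    have c2 : ¬ (y + 1 + 1 ≤ (j:ℤ)) := fun hc => hnn1 ⟨hx, by omega, j, hj, by omega, by omega⟩
    omega
  · -- y ≤ j ≤ m - x - 1
    have c1 : ¬ (x + 1 + 1 + (j:ℤ) ≤ m) := fun hc => hne2 ⟨by omega, hy, j, hj, by omega, h2⟩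
    have c2 : ¬ (y + 1 ≤ (j:ℤ)) := fun hc => hne1 ⟨by omega, by omega, j, hj, by omega, hc⟩
    omega

end Geom
section Connected

variable {m : ℕ} {A : Finset ℕ} {I : Finset ℕ}

lemma ncZ_nonneg (I : Finset ℕ) (a : ℤ) : 0 ≤ northCountZ I a := by
  unfold northCountZ; positivity

lemma path_node_int (hI : I ⊆ Finset.Icc 1 m) (hP : PathInL m A I) {k : ℤ}
    (hk0 : 0 ≤ k) (hkm : k ≤ m) :
    NodeL m A (k - northCountZ I k) (northCountZ I k) := by
  obtain ⟨j, hj, ha, hb⟩ := hP k.toNat (by omega)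
  have h3 : northCount I k.toNat ≤ k.toNat := nc_le hI _
  unfold northCountZ
  exact ⟨by omega, by omega, j, hj, by omega, by omega⟩

lemma Tpat_connected (hI : I ⊆ Finset.Icc 1 m) (hP : PathInL m A I) {x y x' y' : ℤ}
    (hc : ConnectedExt m A x y x' y') : Tpat I x y = Tpat I x' y' := by
  obtain ⟨he1, he2, hcase⟩ := hc
  have hcell1 := he1.1
  have hcell2 := he2.1
  have hb1 := cell_bounds hcell1
  rcases hcase with ⟨hx', hy', hnn⟩ | ⟨hx', hy', hnn⟩
  · rw [hx', hy'] at hcell2 ⊢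
    have hb2 := cell_bounds hcell2
    have mono := ncZ_mono I (show x+y+1 ≤ (x+y+1)+1 by omega)
    have step := ncZ_succ_le I (x+y+1)
    have nn0 := ncZ_nonneg I (x+y+1)
    unfold Tpat
    rw [show x+1+y+1 = (x+y+1)+1 from by ring]
    by_cases h1 : y + 1 ≤ northCountZ I (x+y+1)
    · rw [if_pos h1, if_pos (by omega)]
    · rw [if_neg h1]
      by_cases h2 : y + 1 ≤ northCountZ I ((x+y+1)+1)
      · exfalso
        have hn1 := path_node_int hI hP (k := x+y+1) (by omega) (by omega)
        have hn2 := path_node_int hI hP (k := (x+y+1)+1) (by omega) (by omega)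
        have e1 : northCountZ I (x+y+1) = y := by omega
        have e2 : northCountZ I ((x+y+1)+1) = y+1 := by omega
        rw [e1] at hn1
        rw [e2] at hn2
        apply hnn
        constructor
        · have e : x+y+1-y = x+1 := by ring
          rwa [e] at hn1
        · have e : (x+y+1)+1-(y+1) = x+1 := by ring
          rwa [e] at hn2
      · rw [if_neg h2]
  · rw [hx', hy'] at hcell2 ⊢
    have hb2 := cell_bounds hcell2
    have mono := ncZ_mono I (show x+y+1 ≤ (x+y+1)+1 by omega)
    have step := ncZ_succ_le I (x+y+1)
    have nn0 := ncZ_nonneg I (x+y+1)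
    unfold Tpat
    rw [show x+(y+1)+1 = (x+y+1)+1 from by ring]
    by_cases h2 : y + 1 + 1 ≤ northCountZ I ((x+y+1)+1)
    · rw [if_pos h2, if_pos (by omega)]
    · rw [if_neg h2]
      by_cases h1 : y + 1 ≤ northCountZ I (x+y+1)
      · exfalso
        have hn1 := path_node_int hI hP (k := x+y+1) (by omega) (by omega)
        have hn2 := path_node_int hI hP (k := (x+y+1)+1) (by omega) (by omega)
        have e1 : northCountZ I (x+y+1) = y+1 := by omega
        have e2 : northCountZ I ((x+y+1)+1) = y+1 := by omega
        rw [e1] at hn1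
        rw [e2] at hn2
        apply hnn
        constructor
        · have e : x+y+1-(y+1) = x := by ring
          rwa [e] at hn1
        · have e : (x+y+1)+1-(y+1) = x+1 := by ring
          rwa [e] at hn2
      · rw [if_neg h1]

end Connected
section GTStruct

variable {m : ℕ} {A : Finset ℕ} {T : ℤ → ℤ → ℝ}

lemma ext_of_not_corner {x y : ℤ} (hcell : CellOfL m A x y)
    (h : ¬ NodeL m A (x+1) (y+1) ∨ ¬ NodeL m A (x+1) y ∨ ¬ NodeL m A x (y+1) ∨ ¬ NodeL m A x y) :
    ExternalCell m A x y :=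
  ⟨hcell, fun ⟨h1, h2, h3, h4⟩ => by tauto⟩

lemma not_node_neg_y {x y : ℤ} (hy : y < 0) : ¬ NodeL m A x y := fun h => by
  have := h.2.1; omega

lemma not_node_neg_x {x y : ℤ} (hx : x < 0) : ¬ NodeL m A x y := fun h => by
  have := h.1; omega

lemma T_row_le_aux (hGT : IsGTPatternL m A T) {y : ℤ} :
    ∀ (d : ℕ) (x : ℤ), 0 ≤ x → CellOfL m A (x + d) y → T x y ≤ T (x + d) y := by
  intro d
  induction d with
  | zero => intro x _ _; simp
  | succ n ih =>
    intro x hx0 hcell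
    have hc1 : CellOfL m A (x + n) y := cell_left hcell (by omega) (by push_cast; omega)
    have h1 := ih x hx0 hc1
    have h2 := hGT.2.1 (x+n) y hc1 (by
      rw [show (x+(n:ℤ))+1 = x + ((n:ℕ)+1 : ℕ) from by push_cast; ring]
      exact hcell)
    calc T x y ≤ T (x+n) y := h1
      _ ≤ T (x+n+1) y := h2
      _ = T (x + ((n:ℕ)+1:ℕ)) y := by rw [show x+(n:ℤ)+1 = x + (((n:ℕ)+1:ℕ):ℤ) from by push_cast; ring]

lemma T_row_le (hGT : IsGTPatternL m A T) {x x' y : ℤ} (h' : CellOfL m A x' y)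
    (hx0 : 0 ≤ x) (hx : x ≤ x') : T x y ≤ T x' y := by
  obtain ⟨d, hd⟩ : ∃ d : ℕ, x' = x + d := ⟨(x'-x).toNat, by omega⟩
  subst hd
  exact T_row_le_aux hGT d x hx0 h'

lemma T_col_le_aux (hGT : IsGTPatternL m A T) {x : ℤ} (hx : 0 ≤ x) :
    ∀ (d : ℕ) (y : ℤ), -1 ≤ y → CellOfL m A x (y + d) → T x (y + d) ≤ T x y := by
  intro d
  induction d with
  | zero => intro y _ _; simp
  | succ n ih =>
    intro y hy0 hcell
    have hc1 : CellOfL m A x (y + n) := cell_down hcell hx (by omega) (by push_cast; omega)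
    have h1 := ih y hy0 hc1
    have h2 := hGT.2.2.1 x (y+n) hc1 (by
      rw [show (y+(n:ℤ))+1 = y + ((n:ℕ)+1 : ℕ) from by push_cast; ring]
      exact hcell)
    calc T x (y + ((n:ℕ)+1:ℕ)) = T x (y+n+1) := by
          rw [show y+(n:ℤ)+1 = y + (((n:ℕ)+1:ℕ):ℤ) from by push_cast; ring]
      _ ≤ T x (y+n) := h2
      _ ≤ T x y := h1

lemma T_col_le (hGT : IsGTPatternL m A T) {x y y' : ℤ} (h : CellOfL m A x y)
    (hx : 0 ≤ x) (hy0 : -1 ≤ y') (hy : y' ≤ y) : T x y ≤ T x y' := by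
  obtain ⟨d, hd⟩ : ∃ d : ℕ, y = y' + d := ⟨(y-y').toNat, by omega⟩
  subst hd
  exact T_col_le_aux hGT hx d y' hy0 h

lemma bottom_const_aux (hGT : IsGTPatternL m A T) :
    ∀ (d : ℕ), CellOfL m A (d:ℤ) (-1) → T d (-1) = T 0 (-1) := by
  intro d
  induction d with
  | zero => intro _; norm_num
  | succ n ih =>
    intro hcell
    have hcell' : CellOfL m A ((n:ℕ):ℤ) (-1) := cell_left hcell (by omega) (by push_cast; omega)
    have heq : T n (-1) = T (n+1) (-1) := by
      apply hGT.2.2.2.1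
      refine ⟨ext_of_not_corner hcell' (Or.inr (Or.inr (Or.inr (not_node_neg_y (by omega))))),
        ext_of_not_corner (by rw [show ((n:ℤ))+1 = (((n:ℕ)+1:ℕ):ℤ) from by push_cast; ring]; exact hcell)
          (Or.inr (Or.inr (Or.inr (not_node_neg_y (by omega))))), Or.inl ⟨rfl, rfl, ?_⟩⟩
      rintro ⟨h1, _⟩
      exact not_node_neg_y (by omega) h1
    rw [show (((n:ℕ)+1:ℕ):ℤ) = (n:ℤ)+1 from by push_cast; ring, ← heq]
    exact ih hcell'

lemma bottom_const (hGT : IsGTPatternL m A T) {x : ℤ} (hx : 0 ≤ x)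
    (hcell : CellOfL m A x (-1)) : T x (-1) = T 0 (-1) := by
  obtain ⟨d, hd⟩ : ∃ d : ℕ, x = (d:ℤ) := ⟨x.toNat, by omega⟩
  subst hd
  exact bottom_const_aux hGT d hcell

lemma le_M (hGT : IsGTPatternL m A T) (hA : A ⊆ Finset.range (m+1)) (hAne : A.Nonempty)
    {x y : ℤ} (hcell : CellOfL m A x y) : T x y ≤ T 0 (-1) := by
  have hb := cell_bounds hcell
  by_cases hx : 0 ≤ x
  · have hcb : CellOfL m A x (-1) := cell_down hcell hx (by omega) (by omega)
    calc T x y ≤ T x (-1) := T_col_le hGT hcell hx (by omega) (by omega)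
      _ = T 0 (-1) := bottom_const hGT hx hcb
  · have hx1 : x = -1 := by omega
    subst hx1
    rw [hGT.2.2.2.2 y hcell]
    exact hGT.1 0 (-1) (cell_bottom hA hAne)

lemma T_eq_west_aux (hGT : IsGTPatternL m A T) {y : ℤ} (hy : 0 ≤ y) :
    ∀ (d : ℕ) (x : ℤ), 0 ≤ x → CellOfL m A (x + d) y →
      (∀ x'' : ℤ, x < x'' → x'' ≤ x + d + 1 → ¬ NodeL m A x'' (y+1)) →
      T x y = T (x + d) y := by
  intro d
  induction d with
  | zero => intro x _ _ _; simp
  | succ n ih =>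
    intro x hx0 hcell hno
    have hc1 : CellOfL m A (x + n) y := cell_left hcell (by omega) (by push_cast; omega)
    have heq : T (x+n) y = T (x+n+1) y := by
      apply hGT.2.2.2.1
      refine ⟨ext_of_not_corner hc1 (Or.inl (hno (x+n+1) (by omega) (by push_cast; omega))),
        ext_of_not_corner (by rw [show (x+(n:ℤ))+1 = x+(((n:ℕ)+1:ℕ):ℤ) from by push_cast; ring]; exact hcell)
          (Or.inr (Or.inr (Or.inl (hno (x+n+1) (by omega) (by push_cast; omega))))),
        Or.inl ⟨rfl, rfl, ?_⟩⟩
      rintro ⟨_, h2⟩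
      exact hno (x+n+1) (by omega) (by push_cast; omega) h2
    calc T x y = T (x+n) y := ih x hx0 hc1 (fun x'' h1 h2 => hno x'' h1 (by push_cast at h2 ⊢; omega))
      _ = T (x + ((n:ℕ)+1:ℕ)) y := by
          rw [heq, show x+(n:ℤ)+1 = x + (((n:ℕ)+1:ℕ):ℤ) from by push_cast; ring]

lemma T_eq_west (hGT : IsGTPatternL m A T) {x' x0 y : ℤ} (hy : 0 ≤ y)
    (hcell : CellOfL m A x0 y) (hx0 : 0 ≤ x') (hx : x' ≤ x0)
    (hno : ∀ x'' : ℤ, x' < x'' → x'' ≤ x0 + 1 → ¬ NodeL m A x'' (y+1)) :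
    T x' y = T x0 y := by
  obtain ⟨d, hd⟩ : ∃ d : ℕ, x0 = x' + d := ⟨(x0-x').toNat, by omega⟩
  subst hd
  exact T_eq_west_aux hGT hy d x' hx0 hcell hno

lemma T_eq_up_aux (hGT : IsGTPatternL m A T) {c : ℤ} :
    ∀ (d : ℕ) (y : ℤ), 0 ≤ y →
      (∀ w : ℤ, y ≤ w → w ≤ y + d → CellOfL m A c w) →
      (∀ w : ℤ, y + 1 ≤ w → w ≤ y + d + 1 → ¬ NodeL m A (c+1) w) →
      T c (y + d) = T c y := by
  intro d
  induction d with
  | zero => intro y _ _ _; simp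
  | succ n ih =>
    intro y hy0 hcells hno
    have hc1 : CellOfL m A c (y + n) := hcells _ (by omega) (by push_cast; omega)
    have hc2 : CellOfL m A c (y + n + 1) := by
      have := hcells (y+n+1) (by omega) (by push_cast; omega)
      exact this
    have heq : T c (y+n) = T c (y+n+1) := by
      apply hGT.2.2.2.1
      refine ⟨ext_of_not_corner hc1 (Or.inl (hno (y+n+1) (by omega) (by push_cast; omega))),
        ext_of_not_corner hc2
          (Or.inr (Or.inl (hno (y+n+1) (by omega) (by push_cast; omega)))),
        Or.inr ⟨rfl, rfl, ?_⟩⟩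
      rintro ⟨_, h2⟩
      exact hno (y+n+1) (by omega) (by push_cast; omega) h2
    calc T c (y + ((n:ℕ)+1:ℕ)) = T c (y+n+1) := by
          rw [show y+(n:ℤ)+1 = y + (((n:ℕ)+1:ℕ):ℤ) from by push_cast; ring]
      _ = T c (y+n) := heq.symm
      _ = T c y := ih y hy0 (fun w h1 h2 => hcells w h1 (by push_cast at h2 ⊢; omega))
            (fun w h1 h2 => hno w h1 (by push_cast at h2 ⊢; omega))

lemma T_eq_up (hGT : IsGTPatternL m A T) {c y h : ℤ} (hy : 0 ≤ y) (hyh : y ≤ h)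
    (hcells : ∀ w : ℤ, y ≤ w → w ≤ h → CellOfL m A c w)
    (hno : ∀ w : ℤ, y + 1 ≤ w → w ≤ h + 1 → ¬ NodeL m A (c+1) w) :
    T c h = T c y := by
  obtain ⟨d, hd⟩ : ∃ d : ℕ, h = y + d := ⟨(h-y).toNat, by omega⟩
  subst hd
  exact T_eq_up_aux hGT d y hy (fun w h1 h2 => hcells w h1 h2) (fun w h1 h2 => hno w h1 h2)

lemma T_eq_bottom_step (hGT : IsGTPatternL m A T) {c : ℤ}
    (hc1 : CellOfL m A c (-1)) (hc2 : CellOfL m A c 0) (hno : ¬ NodeL m A (c+1) 0) :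
    T c (-1) = T c 0 := by
  apply hGT.2.2.2.1
  refine ⟨ext_of_not_corner hc1 (Or.inr (Or.inr (Or.inr (not_node_neg_y (by omega))))),
    ext_of_not_corner hc2 (Or.inr (Or.inl hno)), Or.inr ⟨rfl, by norm_num, ?_⟩⟩
  rintro ⟨_, h2⟩
  rw [show (-1:ℤ)+1 = 0 from by norm_num] at h2
  exact hno h2

end GTStruct
open Classical in
/-- Height of the support of `T` (w.r.t. threshold `t`) on the `k`-th antidiagonal. -/
noncomputable def NN (m : ℕ) (A : Finset ℕ) (T : ℤ → ℤ → ℝ) (t : ℝ) (k : ℕ) : ℕ :=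
  (Finset.range k).sup (fun y =>
    if CellOfL m A ((k:ℤ)-1-y) (y:ℤ) ∧ t ≤ T ((k:ℤ)-1-y) (y:ℤ) then y+1 else 0)

section Support

variable {m : ℕ} {A : Finset ℕ} {T : ℤ → ℤ → ℝ} {t : ℝ}

lemma NN_zero : NN m A T t 0 = 0 := by simp [NN]

lemma NN_le_k (k : ℕ) : NN m A T t k ≤ k := by
  apply Finset.sup_le
  intro y hy
  simp only [Finset.mem_range] at hy
  split <;> omega

lemma NN_ge {k : ℕ} {x y : ℤ} (hx : 0 ≤ x) (hy : 0 ≤ y) (hk : x + y + 1 = (k:ℤ))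
    (hcell : CellOfL m A x y) (hT : t ≤ T x y) : y + 1 ≤ (NN m A T t k : ℤ) := by
  classical
  have hmem : y.toNat ∈ Finset.range k := by simp only [Finset.mem_range]; omega
  have hle := Finset.le_sup (f := fun y' : ℕ =>
    if CellOfL m A ((k:ℤ)-1-y') (y':ℤ) ∧ t ≤ T ((k:ℤ)-1-y') (y':ℤ) then y'+1 else 0) hmem
  have e1 : ((k:ℤ)-1-(y.toNat:ℤ)) = x := by omega
  have e2 : ((y.toNat:ℤ)) = y := by omega
  beta_reduce at hle
  rw [e1, e2, if_pos ⟨hcell, hT⟩] at hle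
  have : NN m A T t k = (Finset.range k).sup (fun y' : ℕ =>
    if CellOfL m A ((k:ℤ)-1-y') (y':ℤ) ∧ t ≤ T ((k:ℤ)-1-y') (y':ℤ) then y'+1 else 0) := by
    simp [NN]
  omega

lemma NN_witness {k : ℕ} (h : 0 < NN m A T t k) :
    ∃ y0 : ℕ, y0 < k ∧ y0 + 1 = NN m A T t k ∧ CellOfL m A ((k:ℤ)-1-y0) (y0:ℤ) ∧
      t ≤ T ((k:ℤ)-1-y0) (y0:ℤ) := by
  classical
  have hk : k ≠ 0 := by rintro rfl; rw [NN_zero] at h; omega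
  obtain ⟨y0, hy0, hval⟩ := Finset.exists_mem_eq_sup (Finset.range k)
    (Finset.nonempty_range_iff.mpr hk) (fun y' : ℕ =>
    if CellOfL m A ((k:ℤ)-1-y') (y':ℤ) ∧ t ≤ T ((k:ℤ)-1-y') (y':ℤ) then y'+1 else 0)
  have hval' : NN m A T t k = _ := hval
  rw [show (Finset.range k).sup (fun y' : ℕ =>
    if CellOfL m A ((k:ℤ)-1-y') (y':ℤ) ∧ t ≤ T ((k:ℤ)-1-y') (y':ℤ) then y'+1 else 0)
      = NN m A T t k from by simp [NN]] at hval
  simp only [Finset.mem_range] at hy0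
  by_cases hcond : CellOfL m A ((k:ℤ)-1-y0) (y0:ℤ) ∧ t ≤ T ((k:ℤ)-1-y0) (y0:ℤ)
  · rw [if_pos hcond] at hval
    exact ⟨y0, hy0, hval.symm, hcond⟩
  · rw [if_neg hcond] at hval
    omega

end Support
section SupportGeom

variable {m : ℕ} {A : Finset ℕ} {T : ℤ → ℤ → ℝ} {t : ℝ}

lemma S_xpos (hGT : IsGTPatternL m A T) (ht : 0 < t) {x y : ℤ}
    (hcell : CellOfL m A x y) (hT : t ≤ T x y) : 0 ≤ x := by
  by_contra h
  have hb := cell_bounds hcell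
  have hx : x = -1 := by omega
  subst hx
  rw [hGT.2.2.2.2 y hcell] at hT
  linarith

lemma NN_succ_le (hGT : IsGTPatternL m A T) (ht : 0 < t) (k : ℕ) :
    NN m A T t (k+1) ≤ NN m A T t k + 1 := by
  by_cases h : NN m A T t (k+1) = 0
  · omega
  obtain ⟨y1, hy1k, hy1, hcell, hT⟩ := NN_witness (Nat.pos_of_ne_zero h)
  by_cases h0 : y1 = 0
  · omega
  have hx1 : 0 ≤ (((k+1:ℕ)):ℤ)-1-(y1:ℤ) := S_xpos hGT ht hcell hT
  have hcd : CellOfL m A ((((k+1:ℕ)):ℤ)-1-(y1:ℤ)) ((y1:ℤ)-1) :=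
    cell_down hcell hx1 (by omega) (by omega)
  have hTd : t ≤ T ((((k+1:ℕ)):ℤ)-1-(y1:ℤ)) ((y1:ℤ)-1) :=
    le_trans hT (T_col_le hGT hcell hx1 (by omega) (by omega))
  have := NN_ge (k := k) hx1 (by omega) (by push_cast; ring) hcd hTd
  omega

lemma NN_mono_succ (hGT : IsGTPatternL m A T) (ht : 0 < t) {k : ℕ} (hk : k + 1 ≤ m) :
    NN m A T t k ≤ NN m A T t (k+1) := by
  by_cases h : NN m A T t k = 0
  · omega
  obtain ⟨y0, hy0k, hy0, hcell, hT⟩ := NN_witness (Nat.pos_of_ne_zero h)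
  set x0 : ℤ := (k:ℤ)-1-(y0:ℤ) with hx0def
  have hx0 : 0 ≤ x0 := S_xpos hGT ht hcell hT
  by_cases he : CellOfL m A (x0+1) (y0:ℤ)
  · have hT2 : t ≤ T (x0+1) (y0:ℤ) := le_trans hT (hGT.2.1 x0 y0 hcell he)
    have := NN_ge (k := k+1) (by omega) (by omega) (by push_cast; omega) he hT2
    omega
  · have hn : CellOfL m A x0 ((y0:ℤ)+1) := by
      by_contra hnn
      have := peak_lemma hcell hx0 (by omega) he hnn
      omega
    have hnode : ¬ NodeL m A (x0+1) ((y0:ℤ)+1) := fun hx => he (Or.inl hx)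
    have heq : T x0 (y0:ℤ) = T x0 ((y0:ℤ)+1) := by
      apply hGT.2.2.2.1
      exact ⟨ext_of_not_corner hcell (Or.inl hnode),
        ext_of_not_corner hn (Or.inr (Or.inl hnode)), Or.inr ⟨rfl, rfl, fun hp => hnode hp.2⟩⟩
    have hT2 : t ≤ T x0 ((y0:ℤ)+1) := heq ▸ hT
    have := NN_ge (k := k+1) hx0 (by omega) (by push_cast; omega) hn hT2
    omega

lemma path_node_NN (hGT : IsGTPatternL m A T) (hA : A ⊆ Finset.range (m+1))
    (hAne : A.Nonempty) (ht : 0 < t) (hM : t ≤ T 0 (-1)) {k : ℕ} (hk : k ≤ m) :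
    InL m A (k - NN m A T t k) (NN m A T t k) := by
  by_cases h0 : NN m A T t k = 0
  · rw [h0]
    by_contra hno
    have hno' : ∀ j ∈ A, m < k + j := by
      intro j hj
      by_contra hle
      exact hno ⟨j, hj, by omega, by omega⟩
    have hAne2 := hAne
    obtain ⟨ja, hja⟩ := hAne2
    have hjam := node_j_le hA hja
    have hk1 : 1 ≤ k := by
      by_contra hc
      have := hno' ja hja
      omega
    by_cases hbot : ∃ j ∈ A, k - 1 + j ≤ m
    · obtain ⟨j1, hj1, hj1m⟩ := hbot
      have hj1pos : 1 ≤ j1 := by have := hno' j1 hj1; omega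
      have cellb : CellOfL m A ((k:ℤ)-1) (-1) :=
        Or.inl ⟨by omega, by omega, j1, hj1, by omega, by omega⟩
      have cell0 : CellOfL m A ((k:ℤ)-1) 0 :=
        Or.inl ⟨by omega, by omega, j1, hj1, by omega, by omega⟩
      have hnode : ¬ NodeL m A ((k:ℤ)-1+1) 0 := by
        rintro ⟨-, -, j, hj, hjle, -⟩
        have := hno' j hj
        omega
      have e1 : T ((k:ℤ)-1) (-1) = T 0 (-1) := bottom_const hGT (by omega) cellb
      have e2 : T ((k:ℤ)-1) (-1) = T ((k:ℤ)-1) 0 := T_eq_bottom_step hGT cellb cell0 hnode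
      have hT0 : t ≤ T ((k:ℤ)-1) 0 := by rw [← e2, e1]; exact hM
      have := NN_ge (k := k) (by omega) (by omega) (by omega) cell0 hT0
      omega
    · push_neg at hbot
      have hj'A : A.min' hAne ∈ A := A.min'_mem hAne
      set j' := A.min' hAne with hj'def
      have hj'm : j' ≤ m := node_j_le hA hj'A
      have hj'big : m < k - 1 + j' := hbot j' hj'A
      set c : ℤ := (m:ℤ) - (j':ℤ) with hcdef
      set z : ℤ := (k:ℤ) - 1 - c with hzdef
      have hc0 : 0 ≤ c := by omega
      have hz1 : 1 ≤ z := by omega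
      have hzk : z ≤ (j':ℤ) - 1 := by omega
      have hnoc : ∀ w : ℤ, ¬ NodeL m A (c+1) w := by
        rintro w ⟨-, -, j, hj, hjle, -⟩
        have : j' ≤ j := A.min'_le j hj
        omega
      have hcells : ∀ w : ℤ, -1 ≤ w → w ≤ z → CellOfL m A c w :=
        fun w hw1 hw2 => Or.inl ⟨hc0, by omega, j', hj'A, by omega, by omega⟩
      have e1 : T c (-1) = T 0 (-1) := bottom_const hGT hc0 (hcells _ (by omega) (by omega))
      have e2 : T c (-1) = T c 0 :=
        T_eq_bottom_step hGT (hcells _ (by omega) (by omega)) (hcells _ (by omega) (by omega))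
          (hnoc 0)
      have e3 : T c z = T c 0 :=
        T_eq_up hGT (by omega) (by omega) (fun w hw1 hw2 => hcells w (by omega) hw2)
          (fun w _ _ => hnoc w)
      have hT2 : t ≤ T c z := by rw [e3, ← e2, e1]; exact hM
      have := NN_ge (k := k) hc0 (by omega) (by omega) (hcells z (by omega) le_rfl) hT2
      omega
  · obtain ⟨y0, hy0k, hy0, hcell, hT⟩ := NN_witness (Nat.pos_of_ne_zero h0)
    set x0 : ℤ := (k:ℤ)-1-(y0:ℤ) with hx0def
    have hx0 : 0 ≤ x0 := S_xpos hGT ht hcell hT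
    have hnode : NodeL m A x0 ((y0:ℤ)+1) := by
      by_contra hnd
      have hA' : ∀ j ∈ A, (y0:ℤ)+1 ≤ j → ¬(x0 + j ≤ (m:ℤ)) := fun j hj h1 h2 =>
        hnd ⟨hx0, by omega, j, hj, h2, h1⟩
      by_cases hbig : ∃ j : ℕ, j ∈ A ∧ (m:ℤ) < x0 + (j:ℤ)
      · classical
        set A' := A.filter (fun j : ℕ => (m:ℤ) < x0 + (j:ℤ)) with hA'def
        have hA'ne : A'.Nonempty := by
          obtain ⟨j, hj, hjb⟩ := hbig
          exact ⟨j, Finset.mem_filter.mpr ⟨hj, hjb⟩⟩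
        have hj'mem := A'.min'_mem hA'ne
        set j' := A'.min' hA'ne with hj'def
        have hj'A : j' ∈ A := (Finset.mem_filter.mp hj'mem).1
        have hj'big : (m:ℤ) < x0 + (j':ℤ) := (Finset.mem_filter.mp hj'mem).2
        have hj'min : ∀ j ∈ A, (m:ℤ) < x0 + j → j' ≤ j := fun j hj hb =>
          A'.min'_le j (Finset.mem_filter.mpr ⟨hj, hb⟩)
        have hj'm : j' ≤ m := node_j_le hA hj'A
        set c : ℤ := (m:ℤ) - (j':ℤ) with hcdef
        set z : ℤ := (k:ℤ) - 1 - c with hzdef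
        have hc0 : 0 ≤ c := by omega
        have hcx : c ≤ x0 - 1 := by omega
        have hza : (y0:ℤ)+1 ≤ z := by omega
        have hzb : z ≤ (j':ℤ) - 1 := by omega
        have hnoc : ∀ w : ℤ, (y0:ℤ)+1 ≤ w → ¬ NodeL m A (c+1) w := by
          rintro w hw ⟨-, -, j, hj, hjle, hjw⟩
          by_cases hx : x0 + (j:ℤ) ≤ m
          · exact hA' j hj (by omega) hx
          · have := hj'min j hj (by omega); omega
        have hnoWest : ∀ x'' : ℤ, c < x'' → x'' ≤ x0 + 1 → ¬ NodeL m A x'' ((y0:ℤ)+1) := by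
          rintro x'' hw1 hw2 ⟨-, -, j, hj, hjle, hjw⟩
          by_cases hx : x0 + (j:ℤ) ≤ m
          · exact hA' j hj hjw hx
          · have := hj'min j hj (by omega); omega
        have eWest : T c (y0:ℤ) = T x0 (y0:ℤ) :=
          T_eq_west hGT (by omega) hcell hc0 (by omega) hnoWest
        have hcells : ∀ w : ℤ, (y0:ℤ) ≤ w → w ≤ z → CellOfL m A c w :=
          fun w hw1 hw2 => Or.inl ⟨hc0, by omega, j', hj'A, by omega, by omega⟩
        have eUp : T c z = T c (y0:ℤ) :=
          T_eq_up hGT (by omega) (by omega) hcells (fun w hw1 _ => hnoc w hw1)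
        have hT2 : t ≤ T c z := by rw [eUp, eWest]; exact hT
        have := NN_ge (k := k) hc0 (by omega) (by omega) (hcells z (by omega) le_rfl) hT2
        omega
      · push_neg at hbig
        have hnoAll : ∀ x'' : ℤ, (0:ℤ) < x'' → x'' ≤ x0 + 1 → ¬ NodeL m A x'' ((y0:ℤ)+1) := by
          rintro x'' hw1 hw2 ⟨-, -, j, hj, hjle, hjw⟩
          exact hA' j hj hjw (by have := hbig j hj; omega)
        have eWest : T 0 (y0:ℤ) = T x0 (y0:ℤ) :=
          T_eq_west hGT (by omega) hcell (by omega) hx0 hnoAll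
        have hnode0 : ¬ NodeL m A 0 ((y0:ℤ)+1) := by
          rintro ⟨-, -, j, hj, hjle, hjw⟩
          exact hA' j hj hjw (by have := hbig j hj; omega)
        have cellw : CellOfL m A (-1) (y0:ℤ) := cell_west hA hcell (by omega)
        have cell0 : CellOfL m A 0 (y0:ℤ) := cell_left hcell (by omega) hx0
        have heq : T (-1) (y0:ℤ) = T 0 (y0:ℤ) := by
          apply hGT.2.2.2.1
          refine ⟨ext_of_not_corner cellw (Or.inr (Or.inr (Or.inr (not_node_neg_x (by omega))))),
            ext_of_not_corner cell0 (Or.inr (Or.inr (Or.inl hnode0))),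
            Or.inl ⟨by norm_num, rfl, ?_⟩⟩
          rintro ⟨-, hcontra⟩
          rw [show (-1:ℤ)+1 = 0 from by norm_num] at hcontra
          exact hnode0 hcontra
        have hzero : T (-1) (y0:ℤ) = 0 := hGT.2.2.2.2 _ cellw
        rw [hzero] at heq
        rw [← heq] at eWest
        linarith
    obtain ⟨-, -, j, hj, hj1, hj2⟩ := hnode
    exact ⟨j, hj, by omega, by omega⟩

end SupportGeom
open Classical in
/-- The boundary path of the support of `T` at threshold `t`. -/
noncomputable def Ipath (m : ℕ) (A : Finset ℕ) (T : ℤ → ℤ → ℝ) (t : ℝ) : Finset ℕ :=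
  (Finset.Icc 1 m).filter (fun k => NN m A T t k = NN m A T t (k-1) + 1)

section Peel

variable {m : ℕ} {A : Finset ℕ} {T : ℤ → ℤ → ℝ} {t : ℝ}

lemma Ipath_subset : Ipath m A T t ⊆ Finset.Icc 1 m := Finset.filter_subset _ _

lemma nc_Ipath (hGT : IsGTPatternL m A T) (ht : 0 < t) :
    ∀ k ≤ m, northCount (Ipath m A T t) k = NN m A T t k := by
  intro k
  induction k with
  | zero => intro _; rw [nc_zero Ipath_subset, NN_zero]
  | succ n ih =>
    intro hn
    have hih := ih (by omega)
    rw [nc_succ]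
    have hmono := NN_mono_succ hGT ht (k := n) (by omega)
    have hle := NN_succ_le hGT ht (T := T) (A := A) (m := m) n
    have hmem : (n+1 ∈ Ipath m A T t) ↔ NN m A T t (n+1) = NN m A T t n + 1 := by
      classical
      rw [Ipath, Finset.mem_filter]
      constructor
      · rintro ⟨-, h⟩
        simpa using h
      · intro h
        refine ⟨by simp; omega, by simpa using h⟩
    by_cases hcase : NN m A T t (n+1) = NN m A T t n + 1
    · rw [if_pos (hmem.mpr hcase)]
      omega
    · rw [if_neg (fun hc => hcase (hmem.mp hc))]
      omega

lemma peel (hGT : IsGTPatternL m A T) (hA : A ⊆ Finset.range (m+1)) (hAne : A.Nonempty)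
    (ht : 0 < t) (hmin : ∀ x y, CellOfL m A x y → 0 < T x y → t ≤ T x y)
    (hM : t ≤ T 0 (-1)) :
    ∃ I : Finset ℕ, I ⊆ Finset.Icc 1 m ∧ PathInL m A I ∧
      ∀ x y, CellOfL m A x y → Tpat I x y = if t ≤ T x y then 1 else 0 := by
  refine ⟨Ipath m A T t, Ipath_subset, ?_, ?_⟩
  · intro k hkm
    rw [nc_Ipath hGT ht k hkm]
    exact path_node_NN hGT hA hAne ht hM hkm
  · intro x y hcell
    have hb := cell_bounds hcell
    have hNZ : northCountZ (Ipath m A T t) (x+y+1) = (NN m A T t (x+y+1).toNat : ℤ) := by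
      unfold northCountZ
      rw [nc_Ipath hGT ht (x+y+1).toNat (by omega)]
    suffices hiff : (y + 1 ≤ northCountZ (Ipath m A T t) (x+y+1)) ↔ (t ≤ T x y) by
      unfold Tpat
      by_cases hc : t ≤ T x y
      · rw [if_pos (hiff.mpr hc), if_pos hc]
      · rw [if_neg (fun hcc => hc (hiff.mp hcc)), if_neg hc]
    by_cases hym : y = -1
    · subst hym
      have hx0 : 0 ≤ x := by omega
      have e1 : T x (-1) = T 0 (-1) := bottom_const hGT hx0 hcell
      have := ncZ_nonneg (Ipath m A T t) (x + (-1) + 1)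
      constructor
      · intro _; rw [e1]; exact hM
      · intro _; omega
    · have hy0 : 0 ≤ y := by omega
      by_cases hxm : x = -1
      · subst hxm
        have hzero : T (-1) y = 0 := hGT.2.2.2.2 y hcell
        constructor
        · intro hcc
          exfalso
          rw [hNZ] at hcc
          have := NN_le_k (m := m) (A := A) (T := T) (t := t) ((-1) + y + 1).toNat
          omega
        · intro hcc
          rw [hzero] at hcc
          linarith
      · have hx0 : 0 ≤ x := by omega
        rw [hNZ]
        constructor
        · intro hcc
          have hpos : 0 < NN m A T t (x+y+1).toNat := by omega
          obtain ⟨y0, hy0k, hy0eq, hcell0, hT0⟩ := NN_witness hpos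
          set x0 : ℤ := (((x+y+1).toNat : ℕ):ℤ)-1-(y0:ℤ) with hx0def
          have hx00 : 0 ≤ x0 := S_xpos hGT ht hcell0 hT0
          have hyy0 : y ≤ (y0:ℤ) := by omega
          have hcd : CellOfL m A x0 y := cell_down hcell0 hx00 (by omega) hyy0
          have hTd : t ≤ T x0 y := le_trans hT0 (T_col_le hGT hcell0 hx00 (by omega) hyy0)
          have hxx0 : x0 ≤ x := by omega
          exact le_trans hTd (T_row_le hGT hcell hx00 hxx0)
        · intro hcc
          have := NN_ge (k := (x+y+1).toNat) hx0 hy0 (by omega) hcell hcc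
          omega

end Peel
open Classical in
/-- The finite set of positive values of `T` on the cells of `L`. -/
noncomputable def posVals (m : ℕ) (A : Finset ℕ) (T : ℤ → ℤ → ℝ) : Finset ℝ :=
  ((((Finset.Icc (-1:ℤ) (m:ℤ)) ×ˢ (Finset.Icc (-1:ℤ) (m:ℤ))).filter
    (fun p => CellOfL m A p.1 p.2)).image (fun p => T p.1 p.2)).filter (fun v => 0 < v)

section Main

variable {m : ℕ} {A : Finset ℕ} {T : ℤ → ℤ → ℝ}

lemma mem_posVals {x y : ℤ} (hcell : CellOfL m A x y) (hpos : 0 < T x y) :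
    T x y ∈ posVals m A T := by
  classical
  have hb := cell_bounds hcell
  rw [posVals]
  simp only [Finset.mem_filter, Finset.mem_image]
  exact ⟨⟨(x, y), by
    simp only [Finset.mem_filter, Finset.mem_product, Finset.mem_Icc]
    exact ⟨⟨⟨by omega, by omega⟩, ⟨by omega, by omega⟩⟩, hcell⟩, rfl⟩, hpos⟩

lemma pos_mem_posVals {v : ℝ} (hv : v ∈ posVals m A T) :
    0 < v ∧ ∃ x y : ℤ, CellOfL m A x y ∧ T x y = v := by
  classical
  rw [posVals] at hv
  simp only [Finset.mem_filter, Finset.mem_image] at hv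
  obtain ⟨⟨⟨x, y⟩, hmem, heq⟩, hpos⟩ := hv
  simp only [Finset.mem_filter] at hmem
  exact ⟨hpos, x, y, hmem.2, heq⟩

lemma main_aux (hA : A ⊆ Finset.range (m+1)) (hAne : A.Nonempty) :
    ∀ n : ℕ, ∀ T : ℤ → ℤ → ℝ, IsGTPatternL m A T → (posVals m A T).card ≤ n →
    ∃ c : Finset ℕ → ℝ, (∀ I, 0 ≤ c I) ∧
      (∀ I, c I ≠ 0 → I ⊆ Finset.Icc 1 m ∧ PathInL m A I) ∧
      (∀ x y : ℤ, CellOfL m A x y →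
        T x y = ∑ I ∈ (Finset.Icc 1 m).powerset, c I * Tpat I x y) := by
  intro n
  induction n with
  | zero =>
    intro T hGT hcard
    refine ⟨fun _ => 0, fun _ => le_rfl, fun I hI => absurd rfl hI, ?_⟩
    intro x y hcell
    have hzero : T x y = 0 := by
      rcases eq_or_lt_of_le (hGT.1 x y hcell) with h | h
      · exact h.symm
      · exfalso
        have hin := mem_posVals hcell h
        have hemp : posVals m A T = ∅ := Finset.card_eq_zero.mp (by omega)
        rw [hemp] at hin
        simp at hin
    rw [hzero]
    rw [Finset.sum_eq_zero (fun I _ => by ring)]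
  | succ n ih =>
    intro T hGT hcard
    by_cases hne : (posVals m A T).Nonempty
    case neg =>
      refine ⟨fun _ => 0, fun _ => le_rfl, fun I hI => absurd rfl hI, ?_⟩
      intro x y hcell
      have hzero : T x y = 0 := by
        rcases eq_or_lt_of_le (hGT.1 x y hcell) with h | h
        · exact h.symm
        · exact absurd ⟨_, mem_posVals hcell h⟩ hne
      rw [hzero]
      rw [Finset.sum_eq_zero (fun I _ => by ring)]
    case pos =>
    classical
    set t := (posVals m A T).min' hne with htdef
    have htmem : t ∈ posVals m A T := (posVals m A T).min'_mem hne
    obtain ⟨ht, xs, ys, hcs, hTs⟩ := pos_mem_posVals htmem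
    have hmin : ∀ x y : ℤ, CellOfL m A x y → 0 < T x y → t ≤ T x y :=
      fun x y hc hp => (posVals m A T).min'_le _ (mem_posVals hc hp)
    have hM : t ≤ T 0 (-1) := by
      rw [← hTs]
      exact le_M hGT hA hAne hcs
    obtain ⟨I, hIs, hIp, hIiff⟩ := peel hGT hA hAne ht hmin hM
    set T' : ℤ → ℤ → ℝ := fun x y => T x y - t * Tpat I x y with hT'def
    have hTzero : ∀ x y : ℤ, CellOfL m A x y → ¬ t ≤ T x y → T x y = 0 := by
      intro x y hc hnt
      rcases eq_or_lt_of_le (hGT.1 x y hc) with h | h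
      · exact h.symm
      · exact absurd (hmin x y hc h) hnt
    have hnn' : ∀ x y : ℤ, CellOfL m A x y → 0 ≤ T' x y := by
      intro x y hc
      by_cases hcc : t ≤ T x y
      · simp only [hT'def, hIiff x y hc, if_pos hcc]
        linarith
      · simp only [hT'def, hIiff x y hc, if_neg hcc]
        have := hGT.1 x y hc
        linarith
    have hGT' : IsGTPatternL m A T' := by
      refine ⟨hnn', ?_, ?_, ?_, ?_⟩
      · intro x y h1 h2
        by_cases hc1 : t ≤ T x y
        · have hc2 : t ≤ T (x+1) y := le_trans hc1 (hGT.2.1 x y h1 h2)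
          have := hGT.2.1 x y h1 h2
          simp only [hT'def, hIiff x y h1, hIiff (x+1) y h2, if_pos hc1, if_pos hc2]
          linarith
        · have h0 : T' x y = 0 := by
            have hTp : Tpat I x y = 0 := by rw [hIiff x y h1, if_neg hc1]
            simp only [hT'def, hTp, hTzero x y h1 hc1]
            ring
          rw [h0]
          exact hnn' (x+1) y h2
      · intro x y h1 h2
        by_cases hc2 : t ≤ T x (y+1)
        · have hc1 : t ≤ T x y := le_trans hc2 (hGT.2.2.1 x y h1 h2)
          have := hGT.2.2.1 x y h1 h2
          simp only [hT'def, hIiff x y h1, hIiff x (y+1) h2, if_pos hc1, if_pos hc2]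
          linarith
        · have h0 : T' x (y+1) = 0 := by
            have hTp : Tpat I x (y+1) = 0 := by rw [hIiff x (y+1) h2, if_neg hc2]
            simp only [hT'def, hTp, hTzero x (y+1) h2 hc2]
            ring
          rw [h0]
          exact hnn' x y h1
      · intro x y x' y' hconn
        have e1 := hGT.2.2.2.1 x y x' y' hconn
        have e2 := Tpat_connected hIs hIp hconn
        simp only [hT'def, e1, e2]
      · intro y hcell
        have hb := cell_bounds hcell
        have e1 := hGT.2.2.2.2 y hcell
        have e2 : Tpat I (-1) y = 0 := Tpat_west hIs (by omega)
        simp only [hT'def, e1, e2]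
        ring
    have hsub : posVals m A T' ⊆ ((posVals m A T).erase t).image (fun v => v - t) := by
      intro v hv
      obtain ⟨hvpos, x, y, hc, hveq⟩ := pos_mem_posVals hv
      by_cases hcc : t ≤ T x y
      · have he : T' x y = T x y - t := by
          simp only [hT'def, hIiff x y hc, if_pos hcc]
          ring
        rw [Finset.mem_image]
        refine ⟨T x y, Finset.mem_erase.mpr ⟨?_, mem_posVals hc (by linarith)⟩, by
          rw [← hveq, he]⟩
        intro heq
        rw [← hveq, he, heq] at hvpos
        linarith
      · exfalso
        have he : T' x y = 0 := by
          have hTp : Tpat I x y = 0 := by rw [hIiff x y hc, if_neg hcc]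
          simp only [hT'def, hTp, hTzero x y hc hcc]
          ring
        rw [← hveq, he] at hvpos
        linarith
    have hcard' : (posVals m A T').card ≤ n := by
      have h1 := Finset.card_le_card hsub
      have h2 := Finset.card_image_le (s := (posVals m A T).erase t) (f := fun v => v - t)
      have h3 := Finset.card_erase_of_mem htmem
      have h4 : 1 ≤ (posVals m A T).card := Finset.card_pos.mpr hne
      omega
    obtain ⟨c', hc'0, hc's, hc'sum⟩ := ih T' hGT' hcard'
    refine ⟨fun J => c' J + if J = I then t else 0, ?_, ?_, ?_⟩
    · intro J
      dsimp only
      have h1 : (0:ℝ) ≤ if J = I then t else 0 := by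
        split
        · linarith
        · exact le_rfl
      have h2 := hc'0 J
      linarith
    · intro J hJ
      dsimp only at hJ
      by_cases hJI : J = I
      · subst hJI; exact ⟨hIs, hIp⟩
      · apply hc's
        intro hc0
        apply hJ
        rw [hc0, if_neg hJI]
        ring
    · intro x y hcell
      dsimp only
      have e1 := hc'sum x y hcell
      have e2 : ∑ J ∈ (Finset.Icc 1 m).powerset, (if J = I then t else 0) * Tpat J x y
          = t * Tpat I x y := by
        rw [Finset.sum_congr rfl (g := fun J => if J = I then t * Tpat J x y else 0)
          (fun J _ => by by_cases hJI : J = I <;> simp [hJI])]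
        rw [Finset.sum_ite_eq' ((Finset.Icc 1 m).powerset) I (fun J => t * Tpat J x y)]
        rw [if_pos (Finset.mem_powerset.mpr hIs)]
      have eT' : T' x y = T x y - t * Tpat I x y := rfl
      calc T x y = T' x y + t * Tpat I x y := by rw [eT']; ring
        _ = ∑ J ∈ (Finset.Icc 1 m).powerset, c' J * Tpat J x y
              + ∑ J ∈ (Finset.Icc 1 m).powerset, (if J = I then t else 0) * Tpat J x y := by
            rw [← e1, e2]
        _ = ∑ J ∈ (Finset.Icc 1 m).powerset, (c' J + if J = I then t else 0) * Tpat J x y := by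
            rw [← Finset.sum_add_distrib]
            exact Finset.sum_congr rfl (fun J _ => by ring)

end Main
/-- The cone `GT_L` of real-valued Gelfand–Tsetlin patterns of partial staircase shape
`L` equals the nonnegative real span of the indicator patterns `T_p`, as `p` ranges over
the monotone lattice paths from the source to a sink contained in `L`. -/
theorem GT_cone_eq_span (m : ℕ) (A : Finset ℕ) (hA : A ⊆ Finset.range (m+1))
    (hAne : A.Nonempty) (T : ℤ → ℤ → ℝ) :
    IsGTPatternL m A T ↔
      ∃ c : Finset ℕ → ℝ, (∀ I, 0 ≤ c I) ∧
        (∀ I, c I ≠ 0 → I ⊆ Finset.Icc 1 m ∧ PathInL m A I) ∧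
        (∀ x y : ℤ, CellOfL m A x y →
          T x y = ∑ I ∈ (Finset.Icc 1 m).powerset, c I * Tpat I x y) := by
  constructor
  · intro hGT
    exact main_aux hA hAne (posVals m A T).card T hGT le_rfl
  · rintro ⟨c, hc0, hcs, hsum⟩
    refine ⟨?_, ?_, ?_, ?_, ?_⟩
    · intro x y hcell
      rw [hsum x y hcell]
      exact Finset.sum_nonneg (fun J _ => mul_nonneg (hc0 J) (Tpat_nonneg J x y))
    · intro x y h1 h2
      rw [hsum x y h1, hsum (x+1) y h2]
      exact Finset.sum_le_sum (fun J _ => mul_le_mul_of_nonneg_left (Tpat_mono_x J x y) (hc0 J))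
    · intro x y h1 h2
      rw [hsum x (y+1) h2, hsum x y h1]
      exact Finset.sum_le_sum (fun J _ => mul_le_mul_of_nonneg_left (Tpat_mono_y J x y) (hc0 J))
    · intro x y x' y' hconn
      rw [hsum x y hconn.1.1, hsum x' y' hconn.2.1.1]
      refine Finset.sum_congr rfl (fun J _ => ?_)
      by_cases hJ : c J = 0
      · rw [hJ]; ring
      · rw [Tpat_connected (hcs J hJ).1 (hcs J hJ).2 hconn]
    · intro y hcell
      have hb := cell_bounds hcell
      rw [hsum (-1) y hcell]
      refine Finset.sum_eq_zero (fun J _ => ?_)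
      by_cases hJ : c J = 0
      · rw [hJ]; ring
      · rw [Tpat_west (hcs J hJ).1 (by omega), mul_zero]
end
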